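/- arXiv:2301.09505 — 8 statements merged into one kernel-verified Lean document; each statement's English description precedes it below -/
import Mathlib

section
/- Let G and H be finite simple graphs with color maps χ_G : V(G) → C and χ_H : V(H) → C that jointly satisfy the WL-condition. If (v_0, …, v_d) is a walk in G and u_0 ∈ V(H) satisfies χ_H(u_0) = χ_G(v_0), then there exists a walk (u_0, …, u_d) in H with χ_H(u_i) = χ_G(v_i) for all i ∈ {1, …, d}. -/
/-- Color maps `χG : V → C` and `χH : W → C` jointly satisfy the WL-condition if whenever
two vertices have equal colors, then for every color `c` the numbers of their neighbors
with color `c` agree. -/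
def WLCondition {V W C : Type} (G : SimpleGraph V) (H : SimpleGraph W)
    (χG : V → C) (χH : W → C) : Prop :=
  ∀ u : V, ∀ v : W, χG u = χH v → ∀ c : C,
    Nat.card {x : V // G.Adj u x ∧ χG x = c} =
      Nat.card {y : W // H.Adj v y ∧ χH y = c}

lemma WL_step {V W C : Type} [Fintype V] [Fintype W]
    (G : SimpleGraph V) (H : SimpleGraph W) (χG : V → C) (χH : W → C)
    (hWL : WLCondition G H χG χH) {v v' : V} {u : W}
    (hadj : G.Adj v v') (hc : χH u = χG v) :
    ∃ u' : W, H.Adj u u' ∧ χH u' = χG v' := by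
  have hcard := hWL v u hc.symm (χG v')
  have hpos : 0 < Nat.card {x : V // G.Adj v x ∧ χG x = χG v'} := by
    have : Nonempty {x : V // G.Adj v x ∧ χG x = χG v'} := ⟨⟨v', hadj, rfl⟩⟩
    exact Nat.card_pos
  rw [hcard] at hpos
  have : Nonempty {y : W // H.Adj u y ∧ χH y = χG v'} :=
    (Nat.card_pos_iff.mp hpos).1
  obtain ⟨⟨u', h1, h2⟩⟩ := this
  exact ⟨u', h1, h2⟩

/-- If `χG, χH` jointly satisfy the WL-condition, any walk `(v₀,…,v_d)` in `G` can be lifted,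
starting from any `u₀` in `H` of the same color as `v₀`, to a walk `(u₀,…,u_d)` in `H` with
`χH(uᵢ) = χG(vᵢ)` for all `i`. -/
theorem stmt_3 {V W C : Type} [Fintype V] [Fintype W]
    (G : SimpleGraph V) (H : SimpleGraph W) (χG : V → C) (χH : W → C)
    (hWL : WLCondition G H χG χH)
    (d : ℕ) (p : Fin (d + 1) → V)
    (hp : ∀ i : Fin d, G.Adj (p i.castSucc) (p i.succ))
    (u0 : W) (h0 : χH u0 = χG (p 0)) :
    ∃ q : Fin (d + 1) → W, q 0 = u0 ∧
      (∀ i : Fin d, H.Adj (q i.castSucc) (q i.succ)) ∧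
      ∀ i : Fin (d + 1), χH (q i) = χG (p i) := by
  induction d with
  | zero =>
    refine ⟨fun _ => u0, rfl, fun i => i.elim0, fun i => ?_⟩
    have : i = 0 := Fin.fin_one_eq_zero i
    simp [this, h0]
  | succ d ih =>
    obtain ⟨q, hq0, hqadj, hqc⟩ :=
      ih (fun i => p i.castSucc)
        (fun i => by
          have := hp i.castSucc
          rw [Fin.succ_castSucc] at this
          exact this)
        (by simpa using h0)
    have hlastc : χH (q (Fin.last d)) = χG (p (Fin.last d).castSucc) := hqc (Fin.last d)
    have hedge : G.Adj (p (Fin.last d).castSucc) (p (Fin.last d).succ) := hp (Fin.last d)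
    obtain ⟨w, hwadj, hwc⟩ := WL_step G H χG χH hWL hedge hlastc
    refine ⟨Fin.snoc q w, ?_, ?_, ?_⟩
    · have : (0 : Fin (d + 2)) = Fin.castSucc 0 := rfl
      rw [this, Fin.snoc_castSucc, hq0]
    · intro i
      refine Fin.lastCases ?_ (fun j => ?_) i
      · have h1 : (Fin.last d).castSucc = Fin.castSucc (Fin.last d) := rfl
        have h2 : (Fin.last d).succ = Fin.last (d + 1) := rfl
        rw [h1, h2, Fin.snoc_castSucc, Fin.snoc_last]
        exact hwadj
      · have h2 : (j.castSucc).succ = (j.succ).castSucc := (Fin.succ_castSucc j)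
        rw [h2, Fin.snoc_castSucc, Fin.snoc_castSucc]
        exact hqadj j
    · intro i
      refine Fin.lastCases ?_ (fun j => ?_) i
      · rw [Fin.snoc_last]
        exact hwc
      · rw [Fin.snoc_castSucc]
        exact hqc j
end

section
/- Let G and H be finite simple graphs with color maps χ_G and χ_H that jointly satisfy the WL-condition. Then for any color c appearing in G and any vertices u ∈ V(G), v ∈ V(H) with χ_G(u) = χ_H(v), the shortest path distance from u to the color class χ_G^{-1}(c) in G equals the shortest path distance from v to the color class χ_H^{-1}(c) in H. -/
lemma aux_iInf_le_iff {α : Type*} (S : Set α) (f : α → ℕ∞) (n : ℕ) :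
    (⨅ w ∈ S, f w) ≤ n ↔ ∃ w ∈ S, f w ≤ n := by
  constructor
  · intro h
    have h' : (⨅ w ∈ S, f w) < (n : ℕ∞) + 1 :=
      lt_of_le_of_lt h (by exact_mod_cast lt_add_one n)
    obtain ⟨w, hw⟩ := iInf_lt_iff.mp h'
    obtain ⟨hwS, hw'⟩ := iInf_lt_iff.mp hw
    exact ⟨w, hwS, by exact_mod_cast (ENat.lt_add_one_iff (by simp)).mp hw'⟩
  · rintro ⟨w, hwS, hw⟩
    exact le_trans (iInf₂_le w hwS) hw

lemma aux_edist_succ {V : Type*} (G : SimpleGraph V) (u w : V) (n : ℕ) :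
    G.edist u w ≤ ((n : ℕ∞) + 1) ↔ u = w ∨ ∃ x, G.Adj u x ∧ G.edist x w ≤ n := by
  constructor
  · intro h
    have hne : G.edist u w ≠ ⊤ := by
      intro ht
      rw [ht] at h
      have := top_le_iff.mp h
      exact absurd this (by exact_mod_cast ENat.coe_ne_top (n+1))
    obtain ⟨p, hp⟩ := SimpleGraph.exists_walk_of_edist_ne_top hne
    cases p with
    | nil => exact Or.inl rfl
    | cons hadj q =>
        refine Or.inr ⟨_, hadj, ?_⟩
        have hlen : ((q.length + 1 : ℕ) : ℕ∞) ≤ (n : ℕ∞) + 1 := by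
          rw [← SimpleGraph.Walk.length_cons hadj q, hp]; exact h
        have h2 : (q.length + 1 : ℕ) ≤ n + 1 := by exact_mod_cast hlen
        have : (q.length : ℕ) ≤ n := by omega
        exact le_trans (SimpleGraph.edist_le q) (by exact_mod_cast this)
  · rintro (rfl | ⟨x, hadj, hx⟩)
    · simp [SimpleGraph.edist_self]
    · calc G.edist u w ≤ G.edist u x + G.edist x w := SimpleGraph.edist_triangle
        _ ≤ 1 + n := add_le_add (le_of_eq (SimpleGraph.edist_eq_one_iff_adj.mpr hadj)) hx
        _ = (n : ℕ∞) + 1 := add_comm _ _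

lemma aux_key {V W C : Type} [Fintype V] [Fintype W]
    (G : SimpleGraph V) (H : SimpleGraph W) (χG : V → C) (χH : W → C)
    (hWL : WLCondition G H χG χH) (c : C) :
    ∀ n : ℕ, ∀ u : V, ∀ v : W, χG u = χH v →
      (∃ w, χG w = c ∧ G.edist u w ≤ n) → (∃ y, χH y = c ∧ H.edist v y ≤ n) := by
  intro n
  induction n with
  | zero =>
      rintro u v h ⟨w, hw, hle⟩
      have : u = w := SimpleGraph.edist_eq_zero_iff.mp (le_antisymm (by exact_mod_cast hle) (zero_le))
      exact ⟨v, by rw [← h, this, hw], by simp [SimpleGraph.edist_self]⟩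
  | succ n ih =>
      rintro u v h ⟨w, hw, hle⟩
      have hle' : G.edist u w ≤ (n : ℕ∞) + 1 := by push_cast at hle ⊢; exact hle
      rcases (aux_edist_succ G u w n).mp hle' with rfl | ⟨x, hadj, hx⟩
      · exact ⟨v, by rw [← h, hw], by simp [SimpleGraph.edist_self]⟩
      · have hpos : 0 < Nat.card {x' : V // G.Adj u x' ∧ χG x' = χG x} :=
          @Nat.card_pos {x' : V // G.Adj u x' ∧ χG x' = χG x} ⟨⟨x, hadj, rfl⟩⟩ _
        rw [hWL u v h (χG x)] at hpos
        obtain ⟨⟨y, hady, hcy⟩, -⟩ := Nat.card_pos_iff.mp hpos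
        obtain ⟨y', hy', hley'⟩ := ih x y hcy.symm ⟨w, hw, hx⟩
        refine ⟨y', hy', ?_⟩
        push_cast
        calc H.edist v y' ≤ H.edist v y + H.edist y y' := SimpleGraph.edist_triangle
          _ ≤ 1 + n := add_le_add (le_of_eq (SimpleGraph.edist_eq_one_iff_adj.mpr hady)) hley'
          _ = (n : ℕ∞) + 1 := add_comm _ _

lemma aux_enat_le (a b : ℕ∞) (h : ∀ n : ℕ, b ≤ n → a ≤ n) : a ≤ b := by
  induction b using ENat.recTopCoe with
  | top => exact le_top
  | coe n => exact h n le_rfl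



/-- Under the joint WL-condition, for any color `c` appearing in `G` and any vertices
`u ∈ V(G)`, `v ∈ V(H)` of the same color, the shortest path distance from `u` to the color
class of `c` in `G` equals that from `v` to the color class of `c` in `H`. -/
theorem stmt_4 {V W C : Type} [Fintype V] [Fintype W]
    (G : SimpleGraph V) (H : SimpleGraph W) (χG : V → C) (χH : W → C)
    (hWL : WLCondition G H χG χH)
    (c : C) (hc : ∃ x : V, χG x = c)
    (u : V) (v : W) (h : χG u = χH v) :
    (⨅ w ∈ {x : V | χG x = c}, G.edist u w) =
      ⨅ w ∈ {y : W | χH y = c}, H.edist v w := by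
  have hWL' : WLCondition H G χH χG := fun v u h c => (hWL u v h.symm c).symm
  have key : ∀ n : ℕ, ((⨅ w ∈ {x : V | χG x = c}, G.edist u w) ≤ n ↔
      (⨅ w ∈ {y : W | χH y = c}, H.edist v w) ≤ n) := by
    intro n
    rw [aux_iInf_le_iff, aux_iInf_le_iff]
    constructor
    · rintro ⟨w, hw, hle⟩
      obtain ⟨y, hy, hley⟩ := aux_key G H χG χH hWL c n u v h ⟨w, hw, hle⟩
      exact ⟨y, hy, hley⟩
    · rintro ⟨y, hy, hley⟩
      obtain ⟨w, hw, hlew⟩ := aux_key H G χH χG hWL' c n v u h.symm ⟨y, hy, hley⟩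
      exact ⟨w, hw, hlew⟩
  exact le_antisymm (aux_enat_le _ _ fun n hn => (key n).mpr hn)
    (aux_enat_le _ _ fun n hn => (key n).mp hn)
end

section
/- Let G be a graph, {w₁,w₂} an edge of G, and P a path of minimum length from w₁ to w₂ among all paths not using the edge {w₁,w₂}. Let Q be the cycle formed by appending the edge {w₁,w₂} to P. Then for any two vertices x₁, x₂ on Q, the distance between x₁ and x₂ in G equals their distance along the cycle Q. -/
open SimpleGraph

private lemma aux5 {V : Type} [DecidableEq V] {G : SimpleGraph V} {w₁ w₂ : V} {P : G.Walk w₁ w₂}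
    (hPe : s(w₁, w₂) ∉ P.edges)
    (hmin : ∀ P' : G.Walk w₁ w₂, P'.IsPath → s(w₁, w₂) ∉ P'.edges →
      P.length ≤ P'.length)
    {x y : V} (W₁ : G.Walk w₁ x) (A : G.Walk x y) (W₂ : G.Walk y w₂)
    (hsplit : W₁.append (A.append W₂) = P) (R : G.Walk x y)
    (hRe : s(w₁, w₂) ∉ R.edges) :
    A.length ≤ R.length := by
  by_contra hcon
  push_neg at hcon
  set W : G.Walk w₁ w₂ := W₁.append (R.append W₂) with hW
  have hlen : W.length < P.length := by
    rw [← hsplit]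
    simp only [hW, SimpleGraph.Walk.length_append]
    omega
  have hW₁ : ∀ e ∈ W₁.edges, e ∈ P.edges := by
    intro e he
    rw [← hsplit, SimpleGraph.Walk.edges_append, List.mem_append]
    exact Or.inl he
  have hW₂ : ∀ e ∈ W₂.edges, e ∈ P.edges := by
    intro e he
    rw [← hsplit, SimpleGraph.Walk.edges_append, SimpleGraph.Walk.edges_append,
      List.mem_append, List.mem_append]
    exact Or.inr (Or.inr he)
  have hWe : s(w₁, w₂) ∉ W.edges := by
    intro h
    rw [hW, SimpleGraph.Walk.edges_append, SimpleGraph.Walk.edges_append,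
      List.mem_append, List.mem_append] at h
    rcases h with h | h | h
    · exact hPe (hW₁ _ h)
    · exact hRe h
    · exact hPe (hW₂ _ h)
  have h1 := hmin W.bypass W.bypass_isPath
    (fun hc => hWe (W.edges_bypass_subset hc))
  have h2 := W.length_bypass_le
  omega

/-- Let `{w₁,w₂}` be an edge of `G` and `P` a path of minimum length from `w₁` to `w₂`
among all paths avoiding the edge `{w₁,w₂}`; let `Q` be the cycle formed by appending the
edge `{w₁,w₂}` to `P`.  Then for any two vertices `x₁, x₂` on `Q`, the distance between
`x₁` and `x₂` in `G` equals their distance along the cycle `Q` (i.e. their distance in the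
graph consisting of the edges of `Q`). -/
theorem stmt_5 {V : Type} [Fintype V] (G : SimpleGraph V) (w₁ w₂ : V)
    (hadj : G.Adj w₁ w₂) (P : G.Walk w₁ w₂) (hP : P.IsPath)
    (hPe : s(w₁, w₂) ∉ P.edges)
    (hmin : ∀ P' : G.Walk w₁ w₂, P'.IsPath → s(w₁, w₂) ∉ P'.edges →
      P.length ≤ P'.length)
    (x₁ x₂ : V)
    (hx₁ : x₁ ∈ (P.concat hadj.symm).support)
    (hx₂ : x₂ ∈ (P.concat hadj.symm).support) :
    G.edist x₁ x₂ =
      (SimpleGraph.fromEdgeSet {e | e ∈ (P.concat hadj.symm).edges}).edist x₁ x₂ := by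
  classical
  set Q : G.Walk w₁ w₁ := P.concat hadj.symm with hQdef
  set H : SimpleGraph V := SimpleGraph.fromEdgeSet {e | e ∈ Q.edges} with hHdef
  -- every edge of P is an edge of H
  have hPH : ∀ e ∈ P.edges, e ∈ H.edgeSet := by
    intro e he
    rw [hHdef, SimpleGraph.edgeSet_fromEdgeSet]
    refine ⟨?_, G.not_isDiag_of_mem_edgeSet (P.edges_subset_edgeSet he)⟩
    simp only [hQdef, SimpleGraph.Walk.edges_concat, Set.mem_setOf_eq,
      List.concat_eq_append, List.mem_append]
    exact Or.inl he
  -- the edge {w₁, w₂} is an edge of H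
  have hWH : s(w₁, w₂) ∈ H.edgeSet := by
    rw [hHdef, SimpleGraph.edgeSet_fromEdgeSet]
    constructor
    · simp only [hQdef, SimpleGraph.Walk.edges_concat, Set.mem_setOf_eq,
        List.concat_eq_append, List.mem_append, List.mem_singleton]
      exact Or.inr (Sym2.eq_swap)
    · simpa using hadj.ne
  have hHadj : H.Adj w₁ w₂ := H.mem_edgeSet.mp hWH
  -- H ≤ G
  have hHG : H ≤ G := by
    intro a b hab
    rw [hHdef, SimpleGraph.fromEdgeSet_adj] at hab
    have : s(a, b) ∈ Q.edges := hab.1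
    exact G.mem_edgeSet.mp (Q.edges_subset_edgeSet this)
  -- supports
  have hsupp : ∀ x, x ∈ Q.support → x ∈ P.support := by
    intro x hx
    rw [hQdef, SimpleGraph.Walk.support_concat,
      List.mem_append] at hx
    rcases hx with h | h
    · exact h
    · simp only [List.mem_singleton] at h
      subst h
      exact P.start_mem_support
  have hx₁' : x₁ ∈ P.support := hsupp x₁ hx₁
  have hx₂' : x₂ ∈ P.support := hsupp x₂ hx₂
  -- key lemma
  have key : ∀ d : ℕ, ∀ x y, x ∈ P.support → y ∈ P.support →
      G.edist x y ≤ (d : ℕ∞) → H.edist x y ≤ G.edist x y := by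
    intro d
    induction d with
    | zero =>
      intro x y hx hy hle
      have h0 : G.edist x y = 0 := le_antisymm (by simpa using hle) (zero_le)
      have hxy : x = y := SimpleGraph.edist_eq_zero_iff.mp h0
      subst hxy
      simp [SimpleGraph.edist_self]
    | succ d ih =>
      intro x y hx hy hle
      have hne : G.edist x y ≠ ⊤ :=
        (hle.trans_lt (ENat.coe_lt_top _)).ne
      obtain ⟨R, hR⟩ := SimpleGraph.exists_walk_of_edist_ne_top hne
      by_cases he : s(w₁, w₂) ∈ R.edges
      · -- the shortest walk uses the special edge; split at w₁/w₂ and use IH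
        have hw₁R : w₁ ∈ R.support := R.fst_mem_support_of_mem_edges he
        set R₁ := R.takeUntil w₁ hw₁R with hR₁
        set R₂ := R.dropUntil w₁ hw₁R with hR₂
        have hlen12 : R₁.length + R₂.length = R.length := by
          have := congrArg SimpleGraph.Walk.length (R.take_spec hw₁R)
          rwa [SimpleGraph.Walk.length_append] at this
        have heor : s(w₁, w₂) ∈ R₁.edges ∨ s(w₁, w₂) ∈ R₂.edges := by
          have := R.take_spec hw₁R
          rw [← this, SimpleGraph.Walk.edges_append, List.mem_append] at he
          exact he
        rcases heor with he1 | he2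
        · -- edge in R₁ : x → w₁ ; w₂ on R₁
          have hw₂R : w₂ ∈ R₁.support := R₁.snd_mem_support_of_mem_edges he1
          set T := R₁.takeUntil w₂ hw₂R with hT
          set D := R₁.dropUntil w₂ hw₂R with hD
          have hlenTD : T.length + D.length = R₁.length := by
            have := congrArg SimpleGraph.Walk.length (R₁.take_spec hw₂R)
            rwa [SimpleGraph.Walk.length_append] at this
          have hD1 : 1 ≤ D.length := by
            rcases Nat.eq_zero_or_pos D.length with h0 | h1
            · exact absurd (SimpleGraph.Walk.eq_of_length_eq_zero h0).symm hadj.ne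
            · exact h1
          -- G.edist x w₂ ≤ T.length ≤ d ; G.edist w₁ y ≤ R₂.length ≤ d
          have hRled : (R.length : ℕ∞) ≤ (d : ℕ∞) + 1 := by rw [hR]; exact_mod_cast hle
          have hRd : R.length ≤ d + 1 := by exact_mod_cast hRled
          have hTd : T.length ≤ d := by omega
          have hR₂d : R₂.length ≤ d := by omega
          have h1 : H.edist x w₂ ≤ (T.length : ℕ∞) := by
            refine le_trans (ih x w₂ hx P.end_mem_support ?_) (SimpleGraph.edist_le T)
            exact le_trans (SimpleGraph.edist_le T) (by exact_mod_cast hTd)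
          have h2 : H.edist w₁ y ≤ (R₂.length : ℕ∞) := by
            refine le_trans (ih w₁ y P.start_mem_support hy ?_) (SimpleGraph.edist_le R₂)
            exact le_trans (SimpleGraph.edist_le R₂) (by exact_mod_cast hR₂d)
          have h3 : H.edist w₂ w₁ ≤ 1 := by
            simpa using SimpleGraph.edist_le hHadj.symm.toWalk
          calc H.edist x y ≤ H.edist x w₂ + H.edist w₂ y := SimpleGraph.edist_triangle
            _ ≤ H.edist x w₂ + (H.edist w₂ w₁ + H.edist w₁ y) := by
                exact add_le_add (le_refl _) SimpleGraph.edist_triangle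
            _ ≤ (T.length : ℕ∞) + (1 + (R₂.length : ℕ∞)) := by
                exact add_le_add h1 (add_le_add h3 h2)
            _ = ((T.length + 1 + R₂.length : ℕ) : ℕ∞) := by push_cast; ring
            _ ≤ (R.length : ℕ∞) := by
                have : T.length + 1 + R₂.length ≤ R.length := by omega
                exact_mod_cast this
            _ = G.edist x y := hR
        · -- edge in R₂ : w₁ → y ; w₂ on R₂
          have hw₂R : w₂ ∈ R₂.support := R₂.snd_mem_support_of_mem_edges he2
          set T := R₂.takeUntil w₂ hw₂R with hT
          set D := R₂.dropUntil w₂ hw₂R with hD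
          have hlenTD : T.length + D.length = R₂.length := by
            have := congrArg SimpleGraph.Walk.length (R₂.take_spec hw₂R)
            rwa [SimpleGraph.Walk.length_append] at this
          have hT1 : 1 ≤ T.length := by
            rcases Nat.eq_zero_or_pos T.length with h0 | h1
            · exact absurd (SimpleGraph.Walk.eq_of_length_eq_zero h0) hadj.ne
            · exact h1
          have hRled : (R.length : ℕ∞) ≤ (d : ℕ∞) + 1 := by rw [hR]; exact_mod_cast hle
          have hRd : R.length ≤ d + 1 := by exact_mod_cast hRled
          have hR₁d : R₁.length ≤ d := by omega
          have hDd : D.length ≤ d := by omega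
          have h1 : H.edist x w₁ ≤ (R₁.length : ℕ∞) := by
            refine le_trans (ih x w₁ hx P.start_mem_support ?_) (SimpleGraph.edist_le R₁)
            exact le_trans (SimpleGraph.edist_le R₁) (by exact_mod_cast hR₁d)
          have h2 : H.edist w₂ y ≤ (D.length : ℕ∞) := by
            refine le_trans (ih w₂ y P.end_mem_support hy ?_) (SimpleGraph.edist_le D)
            exact le_trans (SimpleGraph.edist_le D) (by exact_mod_cast hDd)
          have h3 : H.edist w₁ w₂ ≤ 1 := by
            simpa using SimpleGraph.edist_le hHadj.toWalk
          calc H.edist x y ≤ H.edist x w₁ + H.edist w₁ y := SimpleGraph.edist_triangle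
            _ ≤ H.edist x w₁ + (H.edist w₁ w₂ + H.edist w₂ y) := by
                exact add_le_add (le_refl _) SimpleGraph.edist_triangle
            _ ≤ (R₁.length : ℕ∞) + (1 + (D.length : ℕ∞)) := by
                exact add_le_add h1 (add_le_add h3 h2)
            _ = ((R₁.length + 1 + D.length : ℕ) : ℕ∞) := by push_cast; ring
            _ ≤ (R.length : ℕ∞) := by
                have : R₁.length + 1 + D.length ≤ R.length := by omega
                exact_mod_cast this
            _ = G.edist x y := hR
      · -- the shortest walk avoids the special edge; compare with the arc of P
        set Pt := P.takeUntil x hx with hPt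
        set Pd := P.dropUntil x hx with hPd
        have hyor : y ∈ Pt.support ∨ y ∈ Pd.support := by
          have := P.take_spec hx
          rw [← this, SimpleGraph.Walk.mem_support_append_iff] at hy
          exact hy
        rcases hyor with hyPt | hyPd
        · -- y comes before x on P
          set W₁ := Pt.takeUntil y hyPt with hW₁
          set A := Pt.dropUntil y hyPt with hA
          have hsplit : W₁.append (A.append Pd) = P := by
            rw [hW₁, hA, SimpleGraph.Walk.append_assoc, Pt.take_spec hyPt,
              P.take_spec hx]
          have hRrev : s(w₁, w₂) ∉ R.reverse.edges := by
            rw [SimpleGraph.Walk.edges_reverse, List.mem_reverse]; exact he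
          have hAR : A.length ≤ R.reverse.length :=
            aux5 hPe hmin W₁ A Pd hsplit R.reverse hRrev
          rw [SimpleGraph.Walk.length_reverse] at hAR
          -- A : y → x is a walk in H
          have hAedges : ∀ e ∈ A.edges, e ∈ H.edgeSet := by
            intro e heA
            apply hPH
            have h1 : e ∈ Pt.edges := Pt.edges_dropUntil_subset hyPt heA
            exact P.edges_takeUntil_subset hx h1
          have hHle : H.edist y x ≤ (A.length : ℕ∞) := by
            have := SimpleGraph.edist_le (A.transfer H hAedges)
            rwa [SimpleGraph.Walk.length_transfer] at this
          rw [SimpleGraph.edist_comm] at hHle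
          refine le_trans hHle ?_
          rw [← hR]
          exact_mod_cast hAR
        · -- x comes before y on P
          set A := Pd.takeUntil y hyPd with hA
          set W₂ := Pd.dropUntil y hyPd with hW₂
          have hsplit : Pt.append (A.append W₂) = P := by
            rw [hA, hW₂, Pd.take_spec hyPd, P.take_spec hx]
          have hAR : A.length ≤ R.length := aux5 hPe hmin Pt A W₂ hsplit R he
          have hAedges : ∀ e ∈ A.edges, e ∈ H.edgeSet := by
            intro e heA
            apply hPH
            have h1 : e ∈ Pd.edges := Pd.edges_takeUntil_subset hyPd heA
            exact P.edges_dropUntil_subset hx h1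
          have hHle : H.edist x y ≤ (A.length : ℕ∞) := by
            have := SimpleGraph.edist_le (A.transfer H hAedges)
            rwa [SimpleGraph.Walk.length_transfer] at this
          refine le_trans hHle ?_
          rw [← hR]
          exact_mod_cast hAR
  -- assemble
  have r1 : G.Reachable w₁ x₁ := ⟨P.takeUntil x₁ hx₁'⟩
  have r2 : G.Reachable w₁ x₂ := ⟨P.takeUntil x₂ hx₂'⟩
  have hreach : G.Reachable x₁ x₂ := r1.symm.trans r2
  obtain ⟨p, hp⟩ := hreach.exists_walk_length_eq_edist
  have hle : G.edist x₁ x₂ ≤ (p.length : ℕ∞) := le_of_eq hp.symm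
  exact le_antisymm (SimpleGraph.edist_anti hHG) (key p.length x₁ x₂ hx₁' hx₂' hle)
end

section
/- Effective resistance satisfies the triangle inequality: for any connected finite simple graph G and any vertices u, v, w, one has dis^R_G(u,v) + dis^R_G(v,w) ≥ dis^R_G(u,w). -/
open Matrix

/-- `B` is the Moore–Penrose pseudoinverse of `A` (the four Penrose conditions). -/
def IsMPInv {V : Type} [Fintype V] (A B : Matrix V V ℝ) : Prop :=
  A * B * A = A ∧ B * A * B = B ∧ (A * B)ᵀ = A * B ∧ (B * A)ᵀ = B * A

/-- Effective resistance computed from a pseudoinverse `B` of the Laplacian: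
`(e_u − e_v)ᵀ B (e_u − e_v)`. -/
def effRes {V : Type} [Fintype V] [DecidableEq V] (B : Matrix V V ℝ) (u v : V) : ℝ :=
  (Pi.single u 1 - Pi.single v 1) ⬝ᵥ B.mulVec (Pi.single u 1 - Pi.single v 1)

namespace EffResAux

set_option linter.unusedSectionVars false

variable {V : Type} [Fintype V] [DecidableEq V]

/-- The signed indicator vector `e_u - e_v`. -/
def δ (u v : V) : V → ℝ := Pi.single u 1 - Pi.single v 1

lemma δ_apply (u v x : V) : δ u v x = (if x = u then (1:ℝ) else 0) - (if x = v then 1 else 0) := by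
  simp [δ, Pi.single_apply]

lemma δ_dot (u v : V) (f : V → ℝ) : δ u v ⬝ᵥ f = f u - f v := by
  simp only [dotProduct, δ_apply, sub_mul, ite_mul, one_mul, zero_mul,
    Finset.sum_sub_distrib, Finset.sum_ite_eq', Finset.mem_univ, if_true]

lemma δ_sum (u v : V) : ∑ i, δ u v i = 0 := by
  simp [δ_apply, Finset.sum_sub_distrib]

lemma dot_symm (C : Matrix V V ℝ) (hC : Cᵀ = C) (x y : V → ℝ) :
    x ⬝ᵥ C.mulVec y = y ⬝ᵥ C.mulVec x := by
  rw [dotProduct_mulVec, dotProduct_comm, ← mulVec_transpose, hC]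

/-- The sum of entries of `L *ᵥ z` is zero. -/
lemma lap_mulVec_sum (G : SimpleGraph V) [DecidableRel G.Adj] (z : V → ℝ) :
    ∑ i, (G.lapMatrix ℝ *ᵥ z) i = 0 := by
  have hsym : ∀ i j, G.lapMatrix ℝ i j = G.lapMatrix ℝ j i := fun i j =>
    (G.isSymm_lapMatrix (R := ℝ)).apply j i
  have hrow : ∀ j, ∑ k, G.lapMatrix ℝ j k = 0 := by
    intro j
    have h1 : (G.lapMatrix ℝ *ᵥ (fun _ ↦ (1:ℝ))) j = 0 := by
      rw [G.lapMatrix_mulVec_const_eq_zero]; rfl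
    simpa [Matrix.mulVec, dotProduct] using h1
  calc ∑ i, (G.lapMatrix ℝ *ᵥ z) i = ∑ i, ∑ j, G.lapMatrix ℝ i j * z j := rfl
    _ = ∑ j, ∑ i, G.lapMatrix ℝ i j * z j := Finset.sum_comm
    _ = ∑ j, (∑ i, G.lapMatrix ℝ i j) * z j := by simp [Finset.sum_mul]
    _ = ∑ j, (∑ i, G.lapMatrix ℝ j i) * z j := by
        refine Finset.sum_congr rfl fun j _ => ?_
        rw [Finset.sum_congr rfl fun i _ => hsym i j]
    _ = 0 := by
        refine Finset.sum_eq_zero fun j _ => ?_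
        rw [hrow j, zero_mul]

/-- If `A C A = A`, `(A C)ᵀ = A C` for the Laplacian of a connected graph, then
`A (C x) = x` for any `x` with zero entry sum. -/
lemma lap_proj (G : SimpleGraph V) [DecidableRel G.Adj] (hG : G.Connected)
    (C : Matrix V V ℝ) (hACA : G.lapMatrix ℝ * C * G.lapMatrix ℝ = G.lapMatrix ℝ)
    (hACsymm : (G.lapMatrix ℝ * C)ᵀ = G.lapMatrix ℝ * C)
    (x : V → ℝ) (hx : ∑ i, x i = 0) :
    G.lapMatrix ℝ *ᵥ (C *ᵥ x) = x := by
  set A := G.lapMatrix ℝ with hA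
  set q : V → ℝ := x - A *ᵥ (C *ᵥ x) with hq
  have hqA : q ᵥ* A = 0 := by
    rw [hq, Matrix.sub_vecMul]
    have h1 : (A *ᵥ (C *ᵥ x)) ᵥ* A = x ᵥ* A := by
      rw [mulVec_mulVec, ← Matrix.vecMul_transpose, hACsymm, Matrix.vecMul_vecMul, hACA]
    rw [h1, sub_self]
  have hq_dot : q ⬝ᵥ (A *ᵥ q) = 0 := by
    rw [dotProduct_mulVec, hqA, zero_dotProduct]
  have hconst : ∀ i j : V, q i = q j := by
    intro i j
    have h0 : Matrix.toLinearMap₂' ℝ A q q = 0 := by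
      rw [Matrix.toLinearMap₂'_apply']
      exact hq_dot
    exact (G.lapMatrix_toLinearMap₂'_apply'_eq_zero_iff_forall_reachable q).mp h0 i j
      (hG.preconnected i j)
  have hqsum : ∑ i, q i = 0 := by
    rw [hq]
    simp only [Pi.sub_apply, Finset.sum_sub_distrib, hx]
    rw [lap_mulVec_sum]
    ring
  have hq0 : ∀ i, q i = 0 := by
    intro i
    have hcard : (0:ℝ) < (Fintype.card V : ℝ) := by
      have : 0 < Fintype.card V := Fintype.card_pos_iff.mpr ⟨i⟩
      exact_mod_cast this
    have hsum : ∑ j, q j = (Fintype.card V : ℝ) * q i := by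
      rw [Finset.sum_congr rfl (fun j _ => hconst j i)]
      simp [Finset.sum_const, mul_comm]
    rw [hqsum] at hsum
    nlinarith [hsum]
  have hzero : q = 0 := funext hq0
  have hxx : x - A *ᵥ (C *ᵥ x) = 0 := hq.symm.trans hzero
  exact (sub_eq_zero.mp hxx).symm

/-- Along a walk from a maximizer to a non-maximizer there is a crossing edge. -/
lemma cross {G : SimpleGraph V} (g : V → ℝ) (m : ℝ) {a u : V} (p : G.Walk a u)
    (hm : ∀ y, g y ≤ m) (ha : g a = m) (hu : g u < m) :
    ∃ b c, G.Adj b c ∧ g b = m ∧ g c < m := by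
  induction p with
  | nil => exact absurd ha (ne_of_lt hu)
  | @cons a b u h q ih =>
    by_cases hb : g b = m
    · exact ih hb hu
    · exact ⟨a, b, h, ha, lt_of_le_of_ne (hm b) hb⟩

/-- Discrete maximum principle: if `L g = e_u - e_v` then `g` attains its maximum at `u`. -/
lemma maxPrinciple (G : SimpleGraph V) [DecidableRel G.Adj] (hG : G.Connected)
    (g : V → ℝ) (u v : V)
    (hg : G.lapMatrix ℝ *ᵥ g = δ u v) : ∀ x, g x ≤ g u := by
  by_contra hcon
  push_neg at hcon
  obtain ⟨x, hx⟩ := hcon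
  have hne : (Finset.univ : Finset V).Nonempty := ⟨x, Finset.mem_univ x⟩
  obtain ⟨a, -, hmax⟩ := Finset.exists_max_image Finset.univ g hne
  set m := g a with hma
  have hm : ∀ y, g y ≤ m := fun y => hmax y (Finset.mem_univ y)
  have hu : g u < m := lt_of_lt_of_le hx (hm x)
  obtain ⟨b, c, hbc, hb, hc⟩ := cross g m ((hG.preconnected a u).some) hm rfl hu
  have heq : (G.lapMatrix ℝ *ᵥ g) b = δ u v b := congrFun hg b
  have hbu : b ≠ u := fun h => by rw [h] at hb; exact absurd hb (ne_of_lt hu)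
  have hrhs : δ u v b ≤ 0 := by
    rw [δ_apply]
    simp only [if_neg hbu]
    split <;> norm_num
  have hlhs : 0 < (G.lapMatrix ℝ *ᵥ g) b := by
    rw [SimpleGraph.lapMatrix_mulVec_apply]
    have hdeg : (G.degree b : ℝ) * g b = ∑ y ∈ G.neighborFinset b, g b := by
      rw [Finset.sum_const, SimpleGraph.degree]
      simp [mul_comm]
    rw [hdeg, ← Finset.sum_sub_distrib]
    apply Finset.sum_pos'
    · intro i _
      rw [hb]
      exact sub_nonneg.mpr (hm i)
    · refine ⟨c, ?_, ?_⟩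
      · rw [SimpleGraph.mem_neighborFinset]; exact hbc
      · rw [hb]; exact sub_pos.mpr hc
  linarith [heq ▸ hlhs]

end EffResAux

open EffResAux in
/-- Effective resistance satisfies the triangle inequality. -/
theorem stmt_11 {V : Type} [Fintype V] [DecidableEq V]
    (G : SimpleGraph V) [DecidableRel G.Adj] (hG : G.Connected)
    (Lplus : Matrix V V ℝ) (hMP : IsMPInv (G.lapMatrix ℝ) Lplus) (u v w : V) :
    effRes Lplus u w ≤ effRes Lplus u v + effRes Lplus v w := by
  classical
  obtain ⟨h1, h2, h3, h4⟩ := hMP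
  set A := G.lapMatrix ℝ with hA
  have hAsymm : Aᵀ = A := G.isSymm_lapMatrix (R := ℝ)
  -- symmetrize the pseudoinverse
  set C : Matrix V V ℝ := (1/2 : ℝ) • (Lplus + Lplusᵀ) with hC
  have hCsymm : Cᵀ = C := by
    rw [hC, Matrix.transpose_smul, Matrix.transpose_add, Matrix.transpose_transpose, add_comm]
  have hABtA : A * Lplusᵀ * A = A := by
    have h : (A * Lplus * A)ᵀ = Aᵀ := by rw [h1]
    rw [Matrix.transpose_mul, Matrix.transpose_mul, hAsymm, ← Matrix.mul_assoc] at h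
    exact h
  have hACA : A * C * A = A := by
    rw [hC, Matrix.mul_smul, Matrix.smul_mul, Matrix.mul_add, Matrix.add_mul, h1, hABtA,
      ← two_smul ℝ A, smul_smul]
    norm_num
  have hABt_symm : (A * Lplusᵀ)ᵀ = A * Lplusᵀ := by
    rw [Matrix.transpose_mul, Matrix.transpose_transpose, hAsymm, ← h4, Matrix.transpose_mul,
      hAsymm]
  have hACsymm : (A * C)ᵀ = A * C := by
    rw [hC, Matrix.mul_smul, Matrix.transpose_smul, Matrix.mul_add, Matrix.transpose_add, h3,
      hABt_symm]
  -- effRes with Lplus equals effRes with the symmetrized C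
  have heff : ∀ x y : V, effRes Lplus x y = δ x y ⬝ᵥ C *ᵥ δ x y := by
    intro x y
    have hdt : δ x y ⬝ᵥ Lplusᵀ *ᵥ δ x y = δ x y ⬝ᵥ Lplus *ᵥ δ x y := by
      rw [Matrix.mulVec_transpose, dotProduct_comm, ← Matrix.dotProduct_mulVec]
    show δ x y ⬝ᵥ Lplus *ᵥ δ x y = δ x y ⬝ᵥ C *ᵥ δ x y
    rw [hC, Matrix.smul_mulVec, Matrix.add_mulVec, dotProduct_smul,
      dotProduct_add, hdt, smul_eq_mul]
    ring
  by_cases huv : u = v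
  · subst huv
    have h0 : effRes Lplus u u = 0 := by rw [effRes]; simp
    rw [h0]; linarith
  by_cases hvw : v = w
  · subst hvw
    have h0 : effRes Lplus v v = 0 := by rw [effRes]; simp
    rw [h0]; linarith
  -- main case
  set g : V → ℝ := C *ᵥ δ u v with hgdef
  set g' : V → ℝ := C *ᵥ δ v w with hg'def
  set f : V → ℝ := C *ᵥ δ u w with hfdef
  have hAg : A *ᵥ g = δ u v := lap_proj G hG C hACA hACsymm _ (δ_sum u v)
  have hAg' : A *ᵥ g' = δ v w := lap_proj G hG C hACA hACsymm _ (δ_sum v w)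
  have hgu : ∀ x, g x ≤ g u := maxPrinciple G hG g u v hAg
  have hgv : ∀ x, g v ≤ g x := by
    intro x
    have hAng : A *ᵥ (-g) = δ v u := by
      rw [Matrix.mulVec_neg, hAg]
      funext i; simp only [Pi.neg_apply, δ_apply]; ring
    have := maxPrinciple G hG (-g) v u hAng x
    simpa using this
  have hg'v : ∀ x, g' x ≤ g' v := maxPrinciple G hG g' v w hAg'
  have hg'w : ∀ x, g' w ≤ g' x := by
    intro x
    have hAng : A *ᵥ (-g') = δ w v := by
      rw [Matrix.mulVec_neg, hAg']
      funext i; simp only [Pi.neg_apply, δ_apply]; ring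
    have := maxPrinciple G hG (-g') w v hAng x
    simpa using this
  have hsplit : δ u w = δ u v + δ v w := by
    funext i; simp only [δ_apply, Pi.add_apply]; ring
  have key1 : δ u v ⬝ᵥ f = g u - g w := by
    rw [hfdef, dot_symm C hCsymm (δ u v) (δ u w), ← hgdef, δ_dot]
  have key2 : δ v w ⬝ᵥ f = g' u - g' w := by
    rw [hfdef, dot_symm C hCsymm (δ v w) (δ u w), ← hg'def, δ_dot]
  have huw : effRes Lplus u w = δ u v ⬝ᵥ f + δ v w ⬝ᵥ f := by
    rw [heff, ← hfdef, hsplit, add_dotProduct]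
  have e1 : effRes Lplus u v = g u - g v := by rw [heff, ← hgdef, δ_dot]
  have e2 : effRes Lplus v w = g' v - g' w := by rw [heff, ← hg'def, δ_dot]
  rw [huw, key1, key2, e1, e2]
  have := hgv w
  have := hg'v u
  linarith
end

section
/- Let G be a connected finite simple graph and v a vertex. Then v is a cut vertex of G if and only if there exist vertices u, w, both different from v, such that dis^R_G(u,v) + dis^R_G(v,w) = dis^R_G(u,w), where dis^R_G denotes effective resistance. -/
open Matrix

/-- A vertex `v` of `G` is a cut vertex if removing it increases the number of
connected components. -/
def IsCutVertex {V : Type} [Fintype V] (G : SimpleGraph V) (v : V) : Prop :=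
  Nat.card G.ConnectedComponent <
    Nat.card (G.induce {w | w ≠ v}).ConnectedComponent

namespace StmtAux

open SimpleGraph Finset

variable {V : Type} [Fintype V] [DecidableEq V]

noncomputable def sumLin (V : Type) [Fintype V] : (V → ℝ) →ₗ[ℝ] ℝ where
  toFun x := ∑ i, x i
  map_add' x y := by simp [Finset.sum_add_distrib]
  map_smul' c x := by simp [Finset.mul_sum]

lemma ker_lap_eq (G : SimpleGraph V) [DecidableRel G.Adj] (hG : G.Connected) :
    LinearMap.ker (Matrix.toLin' (G.lapMatrix ℝ)) =
      Submodule.span ℝ {(fun _ => 1 : V → ℝ)} := by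
  apply le_antisymm
  · intro x hx
    rw [LinearMap.mem_ker, Matrix.toLin'_apply, lapMatrix_mulVec_eq_zero_iff_forall_reachable] at hx
    obtain ⟨v⟩ := hG.nonempty
    have hx' : x = x v • (fun _ => (1:ℝ)) := funext fun i => by
      simp [hx i v (hG.preconnected i v)]
    rw [hx']
    exact Submodule.smul_mem _ _ (Submodule.mem_span_singleton_self _)
  · rw [Submodule.span_le, Set.singleton_subset_iff]
    simp only [SetLike.mem_coe, LinearMap.mem_ker, Matrix.toLin'_apply]
    exact G.lapMatrix_mulVec_const_eq_zero

lemma range_lap_eq (G : SimpleGraph V) [DecidableRel G.Adj] (hG : G.Connected) :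
    LinearMap.range (Matrix.toLin' (G.lapMatrix ℝ)) = LinearMap.ker (sumLin V) := by
  have hne : Nonempty V := hG.nonempty
  obtain ⟨v⟩ := hne
  have hle : LinearMap.range (Matrix.toLin' (G.lapMatrix ℝ)) ≤ LinearMap.ker (sumLin V) := by
    rintro _ ⟨y, rfl⟩
    rw [LinearMap.mem_ker]
    show ∑ i, (Matrix.toLin' (G.lapMatrix ℝ) y) i = 0
    have : ∑ i, (Matrix.toLin' (G.lapMatrix ℝ) y) i
        = (fun _ => (1:ℝ)) ⬝ᵥ ((G.lapMatrix ℝ) *ᵥ y) := by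
      simp [Matrix.toLin'_apply, dotProduct]
    rw [this, Matrix.dotProduct_mulVec, ← Matrix.mulVec_transpose,
      (G.isSymm_lapMatrix (R := ℝ)).eq, G.lapMatrix_mulVec_const_eq_zero]
    simp
  have h1 : Module.finrank ℝ (LinearMap.ker (Matrix.toLin' (G.lapMatrix ℝ))) = 1 := by
    rw [ker_lap_eq G hG]
    rw [finrank_span_singleton]
    intro h
    have := congrFun h v
    simp at this
  have hsurj : LinearMap.range (sumLin V) = ⊤ := by
    rw [LinearMap.range_eq_top]
    intro c
    exact ⟨Pi.single v c, by simp [sumLin, Pi.single_apply]⟩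
  have h2 : Module.finrank ℝ (LinearMap.ker (sumLin V)) + 1 = Fintype.card V := by
    have := (sumLin V).finrank_range_add_finrank_ker
    rw [hsurj] at this
    simp only [finrank_top, Module.finrank_self] at this
    rw [Module.finrank_fintype_fun_eq_card] at this
    omega
  have h3 : Module.finrank ℝ (LinearMap.range (Matrix.toLin' (G.lapMatrix ℝ))) + 1
      = Fintype.card V := by
    have := (Matrix.toLin' (G.lapMatrix ℝ)).finrank_range_add_finrank_ker
    rw [h1, Module.finrank_fintype_fun_eq_card] at this
    exact this
  exact Submodule.eq_of_le_of_finrank_eq hle (by omega)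

lemma lap_mulVec_pinv (G : SimpleGraph V) [DecidableRel G.Adj] (hG : G.Connected)
    (B : Matrix V V ℝ) (hMP : IsMPInv (G.lapMatrix ℝ) B) (x : V → ℝ)
    (hx : ∑ i, x i = 0) : (G.lapMatrix ℝ) *ᵥ (B *ᵥ x) = x := by
  have hx' : x ∈ LinearMap.range (Matrix.toLin' (G.lapMatrix ℝ)) := by
    rw [range_lap_eq G hG]; exact hx
  obtain ⟨y, hy⟩ := hx'
  rw [Matrix.toLin'_apply] at hy
  calc (G.lapMatrix ℝ) *ᵥ (B *ᵥ x) = (G.lapMatrix ℝ * B) *ᵥ x := by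
        rw [Matrix.mulVec_mulVec]
    _ = (G.lapMatrix ℝ * B) *ᵥ ((G.lapMatrix ℝ) *ᵥ y) := by rw [hy]
    _ = (G.lapMatrix ℝ * B * G.lapMatrix ℝ) *ᵥ y := by rw [Matrix.mulVec_mulVec]
    _ = (G.lapMatrix ℝ) *ᵥ y := by rw [hMP.1]
    _ = x := hy

section Potential

variable {G : SimpleGraph V} [DecidableRel G.Adj] {u v : V} {f : V → ℝ}

lemma harmonic_sum (hf : (G.lapMatrix ℝ) *ᵥ f = Pi.single u 1 - Pi.single v 1)
    (x : V) : ∑ y ∈ G.neighborFinset x, (f x - f y) =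
      (if x = u then (1:ℝ) else 0) - (if x = v then (1:ℝ) else 0) := by
  have h := congrFun hf x
  rw [lapMatrix_mulVec_apply] at h
  have hdeg : (G.degree x : ℝ) * f x = ∑ _y ∈ G.neighborFinset x, f x := by
    rw [Finset.sum_const, ← SimpleGraph.card_neighborFinset_eq_degree]
    simp [mul_comm]
  rw [Finset.sum_sub_distrib, ← hdeg, h]
  simp [Pi.single_apply]

lemma min_at_sink (hG : G.Connected) (huv : u ≠ v)
    (hf : (G.lapMatrix ℝ) *ᵥ f = Pi.single u 1 - Pi.single v 1) (x : V) :
    f v ≤ f x := by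
  obtain ⟨m, _, hmin⟩ := Finset.exists_min_image Finset.univ f ⟨v, Finset.mem_univ v⟩
  by_contra hlt
  push_neg at hlt
  have hmv : f m < f v := lt_of_le_of_lt (hmin x (Finset.mem_univ x)) hlt
  have key : ∀ (a c : V) (p : G.Walk a c), c = v → f a = f m → False := by
    intro a c p
    induction p with
    | @nil x => intro he h; rw [he] at h; exact absurd h (ne_of_gt hmv)
    | @cons a b c h q ih =>
      intro hcv hfa
      by_cases hav : a = v
      · exact absurd (hav ▸ hfa) (ne_of_gt hmv)
      by_cases hau : a = u
      · have hs : ∑ y ∈ G.neighborFinset a, (f a - f y) = 1 := by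
          rw [harmonic_sum hf a, if_pos hau, if_neg hav, sub_zero]
        have hnp : ∑ y ∈ G.neighborFinset a, (f a - f y) ≤ 0 :=
          Finset.sum_nonpos fun y _ => by
            have := hmin y (Finset.mem_univ y); rw [hfa]; linarith
        linarith
      · have hs : ∑ y ∈ G.neighborFinset a, (f a - f y) = 0 := by
          rw [harmonic_sum hf a, if_neg hau, if_neg hav, sub_zero]
        have hall := (Finset.sum_eq_zero_iff_of_nonpos
          (fun y _ => by have := hmin y (Finset.mem_univ y); rw [hfa]; linarith :
            ∀ y ∈ G.neighborFinset a, f a - f y ≤ 0)).mp hs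
        have hb : f b = f m := by
          have := hall b (by rw [SimpleGraph.mem_neighborFinset]; exact h)
          linarith [hfa]
        exact ih hcv hb
  obtain ⟨p⟩ := hG.preconnected m v
  exact key m v p rfl rfl

lemma source_lt (hG : G.Connected) (huv : u ≠ v)
    (hf : (G.lapMatrix ℝ) *ᵥ f = Pi.single u 1 - Pi.single v 1) : f v < f u := by
  have hs : ∑ y ∈ G.neighborFinset u, (f u - f y) = 1 := by
    rw [harmonic_sum hf u, if_pos rfl, if_neg huv, sub_zero]
  by_contra h
  push_neg at h
  have hnp : ∑ y ∈ G.neighborFinset u, (f u - f y) ≤ 0 :=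
    Finset.sum_nonpos fun y _ => by
      have := min_at_sink hG huv hf y; linarith
  linarith

/-- If `f w` attains the minimum value `f v`, then no walk from `w` to `u`
avoids `v`. -/
lemma no_walk_of_eq_min (hG : G.Connected) (huv : u ≠ v)
    (hf : (G.lapMatrix ℝ) *ᵥ f = Pi.single u 1 - Pi.single v 1) {w : V}
    (p : G.Walk w u) (hp : v ∉ p.support) (hw : f w = f v) : False := by
  have key : ∀ (a c : V) (q : G.Walk a c), c = u → v ∉ q.support → f a = f v → False := by
    intro a c q
    induction q with
    | @nil x => intro he _ hfa; rw [he] at hfa; exact absurd hfa (ne_of_gt (source_lt hG huv hf))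
    | @cons a b c h q ih =>
      intro hcu hsup hfa
      rw [SimpleGraph.Walk.support_cons, List.mem_cons] at hsup
      push_neg at hsup
      have hav : a ≠ v := fun e => hsup.1 e.symm
      have hau : a ≠ u := fun e => absurd (e ▸ hfa) (ne_of_gt (source_lt hG huv hf))
      have hs : ∑ y ∈ G.neighborFinset a, (f a - f y) = 0 := by
        rw [harmonic_sum hf a, if_neg hau, if_neg hav, sub_zero]
      have hall := (Finset.sum_eq_zero_iff_of_nonpos
        (fun y _ => by have := min_at_sink hG huv hf y; rw [hfa]; linarith :
          ∀ y ∈ G.neighborFinset a, f a - f y ≤ 0)).mp hs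
      have hb : f b = f v := by
        have := hall b (by rw [SimpleGraph.mem_neighborFinset]; exact h)
        linarith [hfa]
      exact ih hcu hsup.2 hb
  exact key w u p rfl hp hw

/-- If there is no walk from `w` to `u` avoiding `v`, then `f w = f v`. -/
lemma eq_min_of_no_walk (hG : G.Connected) (huv : u ≠ v)
    (hf : (G.lapMatrix ℝ) *ᵥ f = Pi.single u 1 - Pi.single v 1) {w : V}
    (hwv : w ≠ v) (hnr : ∀ p : G.Walk w u, v ∈ p.support) : f w = f v := by
  classical
  set C : Finset V := Finset.univ.filter (fun x => ∃ p : G.Walk w x, v ∉ p.support) with hC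
  have hwC : w ∈ C := by
    rw [hC, Finset.mem_filter]
    exact ⟨Finset.mem_univ w, SimpleGraph.Walk.nil, by simp [Ne.symm hwv]⟩
  have huC : u ∉ C := by
    rw [hC, Finset.mem_filter]
    rintro ⟨-, p, hp⟩
    exact hp (hnr p)
  obtain ⟨m, hm, hmax⟩ := Finset.exists_max_image (insert v C) f
    ⟨v, Finset.mem_insert_self v C⟩
  have hCne_v : ∀ a ∈ C, a ≠ v := by
    rintro a ha rfl
    rw [hC, Finset.mem_filter] at ha
    obtain ⟨-, p, hp⟩ := ha
    exact hp p.end_mem_support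
  have hfvm : f v = f m := by
    rcases Finset.mem_insert.mp hm with h | hCm
    · rw [h]
    · obtain ⟨p⟩ := hG.preconnected m v
      have key : ∀ (a c : V) (q : G.Walk a c), c = v → a ∈ C → f a = f m → f v = f m := by
        intro a c q
        induction q with
        | @nil x => intro he haC _; exact absurd he (hCne_v _ haC)
        | @cons a b c h q ih =>
          intro hcv haC hfa
          have hav : a ≠ v := hCne_v _ haC
          have hau : a ≠ u := fun e => huC (e ▸ haC)
          have hs : ∑ y ∈ G.neighborFinset a, (f a - f y) = 0 := by
            rw [harmonic_sum hf a, if_neg hau, if_neg hav, sub_zero]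
          obtain ⟨-, p₀, hp₀⟩ := Finset.mem_filter.mp haC
          have hnbr : ∀ y ∈ G.neighborFinset a, y ≠ v → y ∈ C := by
            intro y hy hyv
            rw [hC, Finset.mem_filter]
            refine ⟨Finset.mem_univ y, p₀.concat (by rw [SimpleGraph.mem_neighborFinset] at hy; exact hy), ?_⟩
            rw [SimpleGraph.Walk.support_concat, List.mem_append]
            rintro (h' | h')
            · exact hp₀ h'
            · simp at h'; exact hyv h'.symm
          have hterm : ∀ y ∈ G.neighborFinset a, 0 ≤ f a - f y := by
            intro y hy
            rcases eq_or_ne y v with he | hyv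
            · have := hmax v (Finset.mem_insert_self v C); rw [hfa, he]; linarith
            · have := hmax y (Finset.mem_insert_of_mem (hnbr y hy hyv))
              rw [hfa]; linarith
          have hall := (Finset.sum_eq_zero_iff_of_nonneg
            (fun y hy => hterm y hy)).mp hs
          have hb : f b = f m := by
            have := hall b (by rw [SimpleGraph.mem_neighborFinset]; exact h)
            linarith [hfa]
          rcases eq_or_ne b v with he | hbv
          · rw [← he]; exact hb
          · exact ih hcv (hnbr b (by rw [SimpleGraph.mem_neighborFinset]; exact h) hbv) hb
      exact key m v p rfl hCm rfl
  have h1 : f w ≤ f m := hmax w (Finset.mem_insert_of_mem hwC)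
  have h2 : f v ≤ f w := min_at_sink hG huv hf w
  linarith [hfvm]

end Potential

section Walks

variable {G : SimpleGraph V} [DecidableRel G.Adj] {s : Set V}

lemma walk_of_induce {a b : s} (p : (G.induce s).Walk a b) :
    ∃ q : G.Walk a b, ∀ x ∈ q.support, x ∈ s := by
  induction p with
  | @nil x => exact ⟨SimpleGraph.Walk.nil, by rintro y hy; simp at hy; exact hy ▸ x.2⟩
  | @cons x y z h q ih =>
    obtain ⟨q', hq'⟩ := ih
    refine ⟨SimpleGraph.Walk.cons (show G.Adj x y from h) q', ?_⟩
    intro t ht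
    rw [SimpleGraph.Walk.support_cons, List.mem_cons] at ht
    rcases ht with rfl | ht
    · exact x.2
    · exact hq' t ht

lemma induce_reach_of_walk {a b : V} (p : G.Walk a b) (hp : ∀ x ∈ p.support, x ∈ s) :
    (G.induce s).Reachable ⟨a, hp a p.start_mem_support⟩ ⟨b, hp b p.end_mem_support⟩ := by
  induction p with
  | nil => rfl
  | @cons x y z h q ih =>
    have hy : y ∈ s := hp y (by simp)
    have hx : x ∈ s := hp x (SimpleGraph.Walk.start_mem_support _)
    have ha : (G.induce s).Adj ⟨x, hx⟩ ⟨y, hy⟩ := h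
    have := ih (fun t ht => hp t (by simp [ht]))
    exact ha.reachable.trans this

end Walks

lemma card_cc_of_connected {W : Type} (G' : SimpleGraph W) (h : G'.Connected) :
    Nat.card G'.ConnectedComponent = 1 := by
  rw [Nat.card_eq_one_iff_unique]
  constructor
  · constructor
    intro c d
    refine SimpleGraph.ConnectedComponent.ind₂ (fun a b => ?_) c d
    exact SimpleGraph.ConnectedComponent.sound (h.preconnected a b)
  · exact h.nonempty.map G'.connectedComponentMk

end StmtAux

open StmtAux SimpleGraph

/-- In a connected graph, `v` is a cut vertex iff there are vertices `u, w ≠ v` with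
`dis^R(u,v) + dis^R(v,w) = dis^R(u,w)`. -/
theorem stmt_12 {V : Type} [Fintype V] [DecidableEq V]
    (G : SimpleGraph V) [DecidableRel G.Adj] (hG : G.Connected)
    (Lplus : Matrix V V ℝ) (hMP : IsMPInv (G.lapMatrix ℝ) Lplus) (v : V) :
    IsCutVertex G v ↔
      ∃ u w : V, u ≠ v ∧ w ≠ v ∧
        effRes Lplus u v + effRes Lplus v w = effRes Lplus u w := by
  classical
  -- generic potentials
  have hsum : ∀ a b : V, ∑ i, (Pi.single a 1 - Pi.single b 1 : V → ℝ) i = 0 := by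
    intro a b
    simp [Finset.sum_sub_distrib, Pi.single_apply]
  have hpot : ∀ a b : V, (G.lapMatrix ℝ) *ᵥ (Lplus *ᵥ (Pi.single a 1 - Pi.single b 1))
      = Pi.single a 1 - Pi.single b 1 := fun a b =>
    lap_mulVec_pinv G hG Lplus hMP _ (hsum a b)
  have heffRes : ∀ (a b : V), effRes Lplus a b
      = (Lplus *ᵥ (Pi.single a 1 - Pi.single b 1)) a
        - (Lplus *ᵥ (Pi.single a 1 - Pi.single b 1)) b := by
    intro a b
    rw [effRes, sub_dotProduct, single_dotProduct, single_dotProduct,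
      one_mul, one_mul]
  -- additivity of delta vectors
  have hdelta : ∀ a b c : V, (Pi.single a 1 - Pi.single b 1 : V → ℝ)
      + (Pi.single b 1 - Pi.single c 1) = Pi.single a 1 - Pi.single c 1 := by
    intro a b c; exact sub_add_sub_cancel _ _ _
  constructor
  · -- cut vertex → resistance additivity
    intro hcut
    rw [IsCutVertex, card_cc_of_connected G hG] at hcut
    have : Nontrivial (G.induce {w | w ≠ v}).ConnectedComponent :=
      (Finite.one_lt_card_iff_nontrivial).mp hcut
    obtain ⟨c, d, hcd⟩ := this
    obtain ⟨a, rfl⟩ := c.exists_rep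
    obtain ⟨b, rfl⟩ := d.exists_rep
    have hnr : ¬ (G.induce {w | w ≠ v}).Reachable a b := fun h => hcd (ConnectedComponent.sound h)
    refine ⟨a, b, a.2, b.2, ?_⟩
    set f := Lplus *ᵥ (Pi.single (a:V) 1 - Pi.single v 1) with hfdef
    set g := Lplus *ᵥ (Pi.single v 1 - Pi.single (b:V) 1) with hgdef
    have hf := hpot a v
    have hg' : (G.lapMatrix ℝ) *ᵥ (-g) = Pi.single (b:V) 1 - Pi.single v 1 := by
      rw [Matrix.mulVec_neg, hpot v b, neg_sub]
    -- no walk from b to a avoiding v, and none from a to b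
    have hnowalk : ∀ (x y : ↥{w | w ≠ v}) (p : G.Walk (x:V) (y:V)), v ∉ p.support →
        (G.induce {w | w ≠ v}).Reachable x y := by
      intro x y p hp
      have hps : ∀ z ∈ p.support, z ∈ {w | w ≠ v} := by
        intro z hz
        exact fun e => hp (e ▸ hz)
      have := induce_reach_of_walk p hps
      simpa using this
    have hfb : f b = f v := by
      apply eq_min_of_no_walk hG a.2 hf b.2
      intro p
      by_contra hv
      exact hnr ((hnowalk b a p hv).symm)
    have hga : (-g) (a:V) = (-g) v := by
      apply eq_min_of_no_walk hG b.2 hg' a.2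
      intro p
      by_contra hv
      exact hnr (hnowalk a b p hv)
    have hga' : g (a:V) = g v := by
      have := hga; simp only [Pi.neg_apply, neg_inj] at this; exact this
    have hfg : Lplus *ᵥ (Pi.single (a:V) 1 - Pi.single (b:V) 1) = f + g := by
      rw [← hdelta a v b, Matrix.mulVec_add]
    rw [heffRes, heffRes, heffRes, ← hfdef, ← hgdef, hfg]
    simp only [Pi.add_apply]
    linarith [hfb, hga']
  · -- resistance additivity → cut vertex
    rintro ⟨u, w, hu, hw, heq⟩
    set f := Lplus *ᵥ (Pi.single u 1 - Pi.single v 1) with hfdef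
    set g := Lplus *ᵥ (Pi.single v 1 - Pi.single w 1) with hgdef
    have hf := hpot u v
    have hg' : (G.lapMatrix ℝ) *ᵥ (-g) = Pi.single w 1 - Pi.single v 1 := by
      rw [Matrix.mulVec_neg, hpot v w, neg_sub]
    have hfg : Lplus *ᵥ (Pi.single u 1 - Pi.single w 1) = f + g := by
      rw [← hdelta u v w, Matrix.mulVec_add]
    rw [heffRes, heffRes, heffRes, ← hfdef, ← hgdef, hfg] at heq
    simp only [Pi.add_apply] at heq
    -- minimum principles
    have hminf : f v ≤ f w := min_at_sink hG hu hf w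
    have hming : (-g) v ≤ (-g) u := min_at_sink hG hw hg' u
    have hming' : g u ≤ g v := by simpa using hming
    have hfw : f w = f v := by linarith
    -- no walk from w to u avoiding v
    have hnr : ∀ p : G.Walk w u, v ∈ p.support := by
      intro p
      by_contra hv
      exact no_walk_of_eq_min hG hu hf p hv hfw
    have huw : u ≠ w := by
      rintro rfl
      exact no_walk_of_eq_min hG hu hf SimpleGraph.Walk.nil (by simp [Ne.symm hw]) hfw
    -- different components in the induced graph
    have hnreach : ¬ (G.induce {x | x ≠ v}).Reachable ⟨w, hw⟩ ⟨u, hu⟩ := by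
      intro h
      obtain ⟨q, hq⟩ := walk_of_induce h.some
      exact hq v (hnr q) rfl
    have : Nontrivial (G.induce {x | x ≠ v}).ConnectedComponent := by
      refine ⟨(G.induce {x | x ≠ v}).connectedComponentMk ⟨w, hw⟩,
        (G.induce {x | x ≠ v}).connectedComponentMk ⟨u, hu⟩, ?_⟩
      intro h
      exact hnreach ((SimpleGraph.ConnectedComponent.eq).mp h)
    rw [IsCutVertex, card_cc_of_connected G hG]
    exact (Finite.one_lt_card_iff_nontrivial).mpr this
end

section
/- Let X be a countable set. Then there exists a function f : X → ℝ (or into a suitable real vector space) such that the map sending each finite multiset M over X to the sum ∑_{x ∈ M} f(x) is injective on multisets of size at most N, for any fixed bound N. -/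
private lemma aux_split (N : ℕ) (A : Multiset ℕ) :
    (A.map (fun a => (N+1)^a)).sum
      = A.count 0 + (N+1) *
        (((A.filter (fun a => ¬ a = 0)).map (fun a => a-1)).map (fun a => (N+1)^a)).sum := by
  conv_lhs => rw [← Multiset.filter_add_not (fun a => a = 0) A]
  rw [Multiset.map_add, Multiset.sum_add]
  congr 1
  · rw [Multiset.filter_eq']
    simp
  · rw [Multiset.map_map]
    have h : ∀ a ∈ A.filter (fun a => ¬ a = 0),
        (N+1)^a = (N+1) * ((fun a => (N+1)^a) ∘ (fun a => a-1)) a := by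
      intro a ha
      have h0 : a ≠ 0 := by simpa using Multiset.of_mem_filter ha
      simp only [Function.comp]
      rw [← pow_succ']
      congr 1
      omega
    rw [Multiset.map_congr rfl h, Multiset.sum_map_mul_left]

private lemma aux_recon (A : Multiset ℕ) :
    A = Multiset.replicate (A.count 0) 0
      + ((A.filter (fun a => ¬ a = 0)).map (fun a => a-1)).map (fun a => a+1) := by
  conv_lhs => rw [← Multiset.filter_add_not (fun a => a = 0) A]
  congr 1
  · rw [Multiset.filter_eq']
  · rw [Multiset.map_map]
    symm
    have h : ∀ a ∈ A.filter (fun a => ¬ a = 0),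
        ((fun a => a+1) ∘ (fun a => a-1)) a = a := by
      intro a ha
      have h0 : a ≠ 0 := by simpa using Multiset.of_mem_filter ha
      simp only [Function.comp]
      omega
    exact (Multiset.map_congr rfl h).trans (Multiset.map_id' _)

private lemma aux_key_s13 (N : ℕ) : ∀ s : ℕ, ∀ A B : Multiset ℕ, A.card ≤ N → B.card ≤ N →
    (A.map (fun a => (N+1)^a)).sum = s → (B.map (fun a => (N+1)^a)).sum = s → A = B := by
  intro s
  induction s using Nat.strong_induction_on with
  | _ s ih =>
    intro A B hA hB hsA hsB
    have hzero : ∀ C : Multiset ℕ, (C.map (fun a => (N+1)^a)).sum = 0 → C = 0 := by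
      intro C hC
      by_contra h
      obtain ⟨a, ha⟩ := Multiset.exists_mem_of_ne_zero h
      have h1 : (N+1)^a ≤ (C.map (fun a => (N+1)^a)).sum :=
        Multiset.single_le_sum (fun x _ => Nat.zero_le x) _ (Multiset.mem_map_of_mem _ ha)
      have h2 : 0 < (N+1)^a := pow_pos (Nat.succ_pos N) a
      omega
    rcases Nat.eq_zero_or_pos s with hs | hs
    · rw [hzero A (hs ▸ hsA), hzero B (hs ▸ hsB)]
    · set A' := (A.filter (fun a => ¬ a = 0)).map (fun a => a-1) with hA'
      set B' := (B.filter (fun a => ¬ a = 0)).map (fun a => a-1) with hB'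
      set tA := (A'.map (fun a => (N+1)^a)).sum with htA
      set tB := (B'.map (fun a => (N+1)^a)).sum with htB
      have eA : s = A.count 0 + (N+1) * tA := by rw [← hsA, aux_split]
      have eB : s = B.count 0 + (N+1) * tB := by rw [← hsB, aux_split]
      have hcA : A.count 0 ≤ N := le_trans (Multiset.count_le_card 0 A) hA
      have hcB : B.count 0 ≤ N := le_trans (Multiset.count_le_card 0 B) hB
      have modA : s % (N+1) = A.count 0 := by
        rw [eA, Nat.add_mul_mod_self_left, Nat.mod_eq_of_lt (by omega)]
      have modB : s % (N+1) = B.count 0 := by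
        rw [eB, Nat.add_mul_mod_self_left, Nat.mod_eq_of_lt (by omega)]
      have divA : s / (N+1) = tA := by
        rw [eA, Nat.add_mul_div_left _ _ (Nat.succ_pos N), Nat.div_eq_of_lt (by omega)]
        omega
      have divB : s / (N+1) = tB := by
        rw [eB, Nat.add_mul_div_left _ _ (Nat.succ_pos N), Nat.div_eq_of_lt (by omega)]
        omega
      have hcard : A'.card ≤ N := by
        rw [hA', Multiset.card_map]
        exact le_trans (Multiset.card_le_card (Multiset.filter_le _ _)) hA
      have hcardB : B'.card ≤ N := by
        rw [hB', Multiset.card_map]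
        exact le_trans (Multiset.card_le_card (Multiset.filter_le _ _)) hB
      have ht : tA < s := by
        rcases Nat.eq_zero_or_pos tA with h0 | h0
        · omega
        · have hA0 : A' ≠ 0 := by
            intro h; rw [h] at htA; simp at htA; omega
          have h1 : 1 ≤ A.card := by
            have := Multiset.card_pos.mpr hA0
            rw [hA', Multiset.card_map] at this
            have := le_trans this (Multiset.card_le_card (Multiset.filter_le _ _))
            omega
          have hN : 1 ≤ N := le_trans h1 hA
          nlinarith [eA]
      have hAB : A' = B' := ih tA ht A' B' hcard hcardB rfl (by omega)
      rw [aux_recon A, aux_recon B, ← modA, ← modB]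
      congr 1
      exact congrArg _ hAB

/-- For a countable set `X` and any size bound `N`, there exists `f : X → ℝ` such that
the map sending a finite multiset `M` over `X` to `∑_{x ∈ M} f(x)` is injective on
multisets of size at most `N`. -/
theorem stmt_13 {X : Type} [Countable X] (N : ℕ) :
    ∃ f : X → ℝ, ∀ M₁ M₂ : Multiset X,
      Multiset.card M₁ ≤ N → Multiset.card M₂ ≤ N →
      (M₁.map f).sum = (M₂.map f).sum → M₁ = M₂ := by
  obtain ⟨e, he⟩ := Countable.exists_injective_nat X
  refine ⟨fun x => ((N+1 : ℕ) ^ (e x) : ℕ), ?_⟩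
  intro M₁ M₂ h₁ h₂ hsum
  have key : ∀ M : Multiset X, (M.map (fun x => (((N+1 : ℕ) ^ (e x) : ℕ) : ℝ))).sum
      = (((M.map e).map (fun a => (N+1)^a)).sum : ℕ) := by
    intro M
    rw [Multiset.map_map, Nat.cast_multiset_sum, Multiset.map_map]
    rfl
  rw [key, key] at hsum
  have hnat : ((M₁.map e).map (fun a => (N+1)^a)).sum = ((M₂.map e).map (fun a => (N+1)^a)).sum := by
    exact_mod_cast hsum
  have := aux_key_s13 N ((M₂.map e).map (fun a => (N+1)^a)).sum (M₁.map e) (M₂.map e)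
    (by rwa [Multiset.card_map]) (by rwa [Multiset.card_map]) hnat rfl
  exact Multiset.map_injective he this
end

section
/- Let G be a connected distance-regular graph on n vertices with diameter D, intersection array {b_0,…,b_{D−1}; c_1,…,c_D} and k-hop-neighbor numbers k_0=1, k_1, …, k_D. Define r_0 = 0 and r_d = r_{d−1} + (2/(n·k_{d−1}·b_{d−1}))·∑_{i=d}^{D} k_i for d ∈ {1,…,D}. Then for any vertices u, v, the effective resistance satisfies dis^R_G(u,v) = r_{dis_G(u,v)}. -/
open Matrix

set_option linter.unusedSectionVars false
set_option maxHeartbeats 1000000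

section Helpers

variable {V : Type} [Fintype V] [DecidableEq V]

private lemma effRes_eq_aux (L B : Matrix V V ℝ)
    (hsym : Lᵀ = L) (h1 : L * B * L = L) (u v : V) (φ : V → ℝ)
    (hφ : L.mulVec φ = Pi.single u 1 - Pi.single v 1) :
    (Pi.single u 1 - Pi.single v 1) ⬝ᵥ B.mulVec (Pi.single u 1 - Pi.single v 1) = φ u - φ v := by
  have hx2 : Pi.single u 1 - Pi.single v 1 = φ ᵥ* L := by
    rw [← hφ, ← hsym, mulVec_transpose, hsym]
  calc (Pi.single u 1 - Pi.single v 1) ⬝ᵥ B.mulVec (Pi.single u 1 - Pi.single v 1)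
      = ((Pi.single u 1 - Pi.single v 1) ᵥ* B) ⬝ᵥ (Pi.single u 1 - Pi.single v 1) := by
        rw [dotProduct_mulVec]
    _ = ((φ ᵥ* L) ᵥ* B) ⬝ᵥ (L.mulVec φ) := by rw [← hx2, hφ]
    _ = (φ ᵥ* (L * B)) ⬝ᵥ (L.mulVec φ) := by rw [vecMul_vecMul]
    _ = ((φ ᵥ* (L * B)) ᵥ* L) ⬝ᵥ φ := by rw [dotProduct_mulVec]
    _ = (φ ᵥ* (L * B * L)) ⬝ᵥ φ := by rw [vecMul_vecMul]
    _ = (φ ᵥ* L) ⬝ᵥ φ := by rw [h1]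
    _ = (Pi.single u 1 - Pi.single v 1) ⬝ᵥ φ := by rw [hx2]
    _ = φ u - φ v := by
        rw [sub_dotProduct, single_dotProduct, single_dotProduct, one_mul, one_mul]

private lemma natCard_setOf_aux (p : V → Prop) [DecidablePred p] :
    Nat.card {y : V | p y} = (Finset.univ.filter p).card := by
  rw [Nat.card_coe_set_eq, Set.ncard_eq_toFinset_card', Set.toFinset_setOf]

private lemma exists_adj_dist_aux (G : SimpleGraph V) (hG : G.Connected) {u v : V} {d : ℕ}
    (h : G.dist u v = d + 1) : ∃ w, G.Adj w v ∧ G.dist u w = d := by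
  have hne : G.dist u v ≠ 0 := by omega
  obtain ⟨p, hp⟩ := (SimpleGraph.Reachable.of_dist_ne_zero hne).exists_walk_length_eq_dist
  have hlen : p.reverse.length = d + 1 := by rw [SimpleGraph.Walk.length_reverse, hp, h]
  cases hq : p.reverse with
  | nil => rw [hq] at hlen; simp at hlen
  | @cons _ w _ hadj q =>
    rw [hq] at hlen
    simp only [SimpleGraph.Walk.length_cons, Nat.add_right_cancel_iff] at hlen
    refine ⟨w, hadj.symm, ?_⟩
    have h1 : G.dist u w ≤ d := by
      rw [SimpleGraph.dist_comm]; exact hlen ▸ SimpleGraph.dist_le q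
    have h2 : G.dist u v ≤ G.dist u w + G.dist w v := hG.dist_triangle
    have h3 : G.dist w v = 1 := SimpleGraph.dist_eq_one_iff_adj.mpr hadj.symm
    omega

private lemma exists_of_le_dist_aux (G : SimpleGraph V) (hG : G.Connected) :
    ∀ (j : ℕ) (u x : V), G.dist u x = j → ∀ d ≤ j, ∃ y, G.dist u y = d := by
  intro j
  induction j with
  | zero =>
    intro u x _ d hd
    obtain rfl : d = 0 := Nat.le_zero.mp hd
    exact ⟨u, SimpleGraph.dist_self⟩
  | succ j ih =>
    intro u x hx d hd
    rcases Nat.lt_or_ge d (j + 1) with h | h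
    · obtain ⟨w, _, hw⟩ := exists_adj_dist_aux G hG hx
      exact ih u w hw d (by omega)
    · obtain rfl : d = j + 1 := le_antisymm hd h
      exact ⟨x, hx⟩

private lemma double_count_aux (G : SimpleGraph V) [DecidableRel G.Adj] (A B : Finset V) :
    ∑ x ∈ A, (B.filter (fun y => G.Adj x y)).card
      = ∑ y ∈ B, (A.filter (fun x => G.Adj y x)).card := by
  simp_rw [Finset.card_filter]
  rw [Finset.sum_comm]
  exact Finset.sum_congr rfl fun y _ => Finset.sum_congr rfl fun x _ => by
    simp only [G.adj_comm]

end Helpers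

/-- A graph is distance-regular if for all `i, j` and all vertex pairs `(u,v)`, `(w,x)` at
equal distance, `|N^i(u) ∩ N^j(v)| = |N^i(w) ∩ N^j(x)|`. -/
def IsDistanceRegular {V : Type} [Fintype V] (G : SimpleGraph V) : Prop :=
  ∀ (i j : ℕ) (u v w x : V), G.dist u v = G.dist w x →
    Nat.card {y : V | G.dist u y = i ∧ G.dist v y = j} =
      Nat.card {y : V | G.dist w y = i ∧ G.dist x y = j}

/-- For a connected distance-regular graph on `n` vertices with diameter `D`, intersection
array `{b₀,…,b_{D−1}; c₁,…,c_D}`, `k`-hop numbers `k_i`, and the recursively defined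
sequence `r_d = r_{d−1} + (2/(n·k_{d−1}·b_{d−1}))·∑_{i=d}^{D} k_i` (with `r_0 = 0`), the
effective resistance satisfies `dis^R(u,v) = r_{dis(u,v)}`. -/
theorem stmt_15 {V : Type} [Fintype V] [DecidableEq V]
    (G : SimpleGraph V) [DecidableRel G.Adj] (hG : G.Connected)
    (hDR : IsDistanceRegular G)
    (D : ℕ) (hD₁ : ∀ u v : V, G.dist u v ≤ D) (hD₂ : ∃ u v : V, G.dist u v = D)
    (k b c : ℕ → ℕ)
    (hk : ∀ j ≤ D, ∀ u : V, Nat.card {y : V | G.dist u y = j} = k j)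
    (hb : ∀ i < D, ∀ u v : V, G.dist u v = i →
      Nat.card {y : V | G.Adj u y ∧ G.dist v y = i + 1} = b i)
    (hc : ∀ i, 1 ≤ i → i ≤ D → ∀ u v : V, G.dist u v = i →
      Nat.card {y : V | G.Adj u y ∧ G.dist v y = i - 1} = c i)
    (r : ℕ → ℝ) (hr0 : r 0 = 0)
    (hr : ∀ d, 1 ≤ d → d ≤ D →
      r d = r (d - 1) +
        2 / ((Fintype.card V : ℝ) * (k (d - 1) : ℝ) * (b (d - 1) : ℝ)) *
          ∑ i ∈ Finset.Icc d D, (k i : ℝ))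
    (Lplus : Matrix V V ℝ) (hMP : IsMPInv (G.lapMatrix ℝ) Lplus) :
    ∀ u v : V, effRes Lplus u v = r (G.dist u v) := by
  classical
  have hne : Nonempty V := hG.nonempty
  set n : ℝ := (Fintype.card V : ℝ) with hn
  have hnpos : (0:ℝ) < n := by
    rw [hn]
    exact_mod_cast (Fintype.card_pos : 0 < Fintype.card V)
  have hnne : n ≠ 0 := ne_of_gt hnpos
  rcases Nat.eq_zero_or_pos D with hD0 | hDpos
  · -- trivial case D = 0
    intro u v
    have huv : u = v := hG.dist_eq_zero_iff.mp (by have := hD₁ u v; omega)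
    subst huv
    simp [effRes, SimpleGraph.dist_self, hr0]
  -- main case
  obtain ⟨u₀, v₀, hDuv⟩ := hD₂
  have hex : ∀ d ≤ D, ∃ y, G.dist u₀ y = d :=
    fun d hd => exists_of_le_dist_aux G hG D u₀ v₀ hDuv d hd
  have hkpos : ∀ d ≤ D, 0 < k d := by
    intro d hd
    obtain ⟨y, hy⟩ := hex d hd
    rw [← hk d hd u₀]
    have : Nonempty {y : V | G.dist u₀ y = d} := ⟨⟨y, hy⟩⟩
    exact Nat.card_pos
  have hcpos : ∀ d, 1 ≤ d → d ≤ D → 0 < c d := by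
    intro d h1 h2
    obtain ⟨y, hy⟩ := hex d h2
    have hy' : G.dist u₀ y = (d - 1) + 1 := by omega
    obtain ⟨w, hw, hwd⟩ := exists_adj_dist_aux G hG hy'
    rw [← hc d h1 h2 y u₀ (by rw [SimpleGraph.dist_comm]; exact hy)]
    have : Nonempty {z : V | G.Adj y z ∧ G.dist u₀ z = d - 1} := ⟨⟨w, hw.symm, hwd⟩⟩
    exact Nat.card_pos
  have hshell : ∀ (w : V) (d : ℕ), d ≤ D →
      (Finset.univ.filter (fun y => G.dist w y = d)).card = k d := by
    intro w d hd
    rw [← hk d hd w, natCard_setOf_aux]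
  -- total count
  have sumN : Fintype.card V = ∑ i ∈ Finset.Icc 0 D, k i := by
    have h := Finset.card_eq_sum_card_fiberwise
      (f := fun y => G.dist u₀ y) (s := Finset.univ) (t := Finset.Icc 0 D)
      (fun x _ => by simp [hD₁])
    rw [Finset.card_univ] at h
    rw [h]
    exact Finset.sum_congr rfl fun i hi => hshell u₀ i (Finset.mem_Icc.mp hi).2
  -- k_d * b_d = k_{d+1} * c_{d+1}
  have hkb : ∀ d, d < D → k d * b d = k (d + 1) * c (d + 1) := by
    intro d hd
    set A := Finset.univ.filter (fun y => G.dist u₀ y = d) with hA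
    set B := Finset.univ.filter (fun y => G.dist u₀ y = d + 1) with hB
    have hA' : ∀ x ∈ A, (B.filter (fun y => G.Adj x y)).card = b d := by
      intro x hx
      have hxd : G.dist u₀ x = d := by simpa [hA] using hx
      have h := hb d hd x u₀ (by rw [SimpleGraph.dist_comm]; exact hxd)
      rw [natCard_setOf_aux] at h
      rw [← h]
      congr 1
      ext y
      simp only [hB, Finset.mem_filter, Finset.mem_univ, true_and]
      tauto
    have hB' : ∀ y ∈ B, (A.filter (fun x => G.Adj y x)).card = c (d + 1) := by
      intro y hy
      have hyd : G.dist u₀ y = d + 1 := by simpa [hB] using hy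
      have h := hc (d + 1) (by omega) (by omega) y u₀ (by rw [SimpleGraph.dist_comm]; exact hyd)
      rw [natCard_setOf_aux] at h
      rw [← h]
      congr 1
      ext x
      simp only [hA, Finset.mem_filter, Finset.mem_univ, true_and, Nat.add_sub_cancel]
      tauto
    calc k d * b d = ∑ x ∈ A, (B.filter (fun y => G.Adj x y)).card := by
          rw [Finset.sum_congr rfl hA', Finset.sum_const, smul_eq_mul,
            hshell u₀ d (le_of_lt hd)]
      _ = ∑ y ∈ B, (A.filter (fun x => G.Adj y x)).card := double_count_aux G A B
      _ = k (d + 1) * c (d + 1) := by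
          rw [Finset.sum_congr rfl hB', Finset.sum_const, smul_eq_mul, hshell u₀ (d + 1) hd]
  have hbpos : ∀ d, d < D → 0 < b d := by
    intro d hd
    have h1 : 0 < k (d + 1) * c (d + 1) :=
      Nat.mul_pos (hkpos (d + 1) hd) (hcpos (d + 1) (by omega) hd)
    rw [← hkb d hd] at h1
    rcases Nat.eq_zero_or_pos (b d) with h | h
    · rw [h, mul_zero] at h1; omega
    · exact h

  -- cast positivity
  have hkR : ∀ d ≤ D, (0:ℝ) < (k d : ℝ) := fun d hd => by exact_mod_cast hkpos d hd
  have hbR : ∀ d, d < D → (0:ℝ) < (b d : ℝ) := fun d hd => by exact_mod_cast hbpos d hd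
  have hcR : ∀ d, 1 ≤ d → d ≤ D → (0:ℝ) < (c d : ℝ) :=
    fun d h1 h2 => by exact_mod_cast hcpos d h1 h2
  have hk0 : k 0 = 1 := by
    rw [← hk 0 (Nat.zero_le D) u₀]
    have hset : {y : V | G.dist u₀ y = 0} = {u₀} := by
      ext y
      simp [hG.dist_eq_zero_iff, eq_comm]
    rw [hset]
    simp
  -- sum facts
  have sumk : ∑ i ∈ Finset.Icc 0 D, (k i : ℝ) = n := by
    rw [hn, sumN]; push_cast; ring
  have hsplit : ∀ d ≤ D, ∑ i ∈ Finset.Icc d D, (k i : ℝ)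
      = (k d : ℝ) + ∑ i ∈ Finset.Icc (d+1) D, (k i : ℝ) := by
    intro d hd
    have hins : Finset.Icc d D = insert d (Finset.Icc (d+1) D) := by
      ext a; simp only [Finset.mem_Icc, Finset.mem_insert]; omega
    rw [hins, Finset.sum_insert (by simp)]
  have split0 : ∑ i ∈ Finset.Icc 1 D, (k i : ℝ) = n - 1 := by
    have h := hsplit 0 (Nat.zero_le D)
    rw [sumk, hk0] at h
    push_cast at h
    linarith
  have sumDD : ∑ i ∈ Finset.Icc D D, (k i : ℝ) = (k D : ℝ) := by
    rw [Finset.Icc_self, Finset.sum_singleton]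
  set g : ℕ → ℝ := fun d => -(r d)/2 with hg
  -- arithmetic identities
  have idA : (b 0 : ℝ) * (g 0 - g 1) = 1 - 1/n := by
    have h1 := hr 1 le_rfl hDpos
    simp only [show (1:ℕ) - 1 = 0 from rfl] at h1
    rw [hr0, split0, hk0] at h1
    have hb0 : (b 0:ℝ) ≠ 0 := ne_of_gt (hbR 0 hDpos)
    simp only [hg, hr0, h1]
    push_cast
    field_simp
    ring
  have idB : ∀ d, 1 ≤ d → d < D →
      (c d:ℝ) * (g d - g (d-1)) + (b d:ℝ) * (g d - g (d+1)) = 0 - 1/n := by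
    intro d h1 h2
    have hrd := hr d h1 (le_of_lt h2)
    have hrd1 := hr (d+1) (by omega) (by omega)
    simp only [Nat.add_sub_cancel] at hrd1
    have hL5 : (k (d-1) : ℝ) * (b (d-1) : ℝ) = (k d : ℝ) * (c d : ℝ) := by
      have h := hkb (d-1) (by omega)
      have hd1 : d - 1 + 1 = d := by omega
      rw [hd1] at h
      exact_mod_cast h
    have hkd : (k d:ℝ) ≠ 0 := ne_of_gt (hkR d (by omega))
    have hcd : (c d:ℝ) ≠ 0 := ne_of_gt (hcR d h1 (by omega))
    have hbd : (b d:ℝ) ≠ 0 := ne_of_gt (hbR d h2)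
    have hden : n * (k (d-1):ℝ) * (b (d-1):ℝ)
        = n * ((k d:ℝ) * (c d:ℝ)) := by
      rw [mul_assoc, hL5]
    have hS := hsplit d (by omega)
    simp only [hg]
    rw [hrd1, hrd, hden, hS]
    field_simp
    ring
  have idC : 1 ≤ D → (c D:ℝ) * (g D - g (D-1)) = 0 - 1/n := by
    intro h1
    have hrd := hr D h1 le_rfl
    have hL5 : (k (D-1) : ℝ) * (b (D-1) : ℝ) = (k D : ℝ) * (c D : ℝ) := by
      have h := hkb (D-1) (by omega)
      have hd1 : D - 1 + 1 = D := by omega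
      rw [hd1] at h
      exact_mod_cast h
    have hkd : (k D:ℝ) ≠ 0 := ne_of_gt (hkR D le_rfl)
    have hcd : (c D:ℝ) ≠ 0 := ne_of_gt (hcR D h1 le_rfl)
    have hden : n * (k (D-1):ℝ) * (b (D-1):ℝ)
        = n * ((k D:ℝ) * (c D:ℝ)) := by
      rw [mul_assoc, hL5]
    simp only [hg]
    rw [hrd, hden, sumDD]
    field_simp
    ring
  -- the key pointwise computation
  have key : ∀ w x : V, (G.lapMatrix ℝ *ᵥ fun y => g (G.dist w y)) x
      = (if x = w then (1:ℝ) else 0) - 1/n := by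
    intro w x
    obtain ⟨d, hd⟩ : ∃ d, G.dist w x = d := ⟨_, rfl⟩
    have hdD : d ≤ D := hd ▸ hD₁ w x
    rw [SimpleGraph.lapMatrix_mulVec_apply]
    simp only [hd]
    set N := G.neighborFinset x with hN
    have hboundd : ∀ y ∈ N, d ≤ G.dist w y + 1 ∧ G.dist w y ≤ d + 1 := by
      intro y hy
      rw [hN, SimpleGraph.mem_neighborFinset] at hy
      have e1 : G.dist x y = 1 := SimpleGraph.dist_eq_one_iff_adj.mpr hy
      have e2 : G.dist w y ≤ G.dist w x + G.dist x y := hG.dist_triangle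
      have e3 : G.dist w x ≤ G.dist w y + G.dist y x := hG.dist_triangle
      rw [show G.dist y x = G.dist x y from SimpleGraph.dist_comm] at e3
      rw [hd] at e2 e3
      omega
    set p1 : V → Prop := fun y => G.dist w y + 1 = d with hp1
    have ht2 : (N.filter (fun y => ¬ p1 y)).filter (fun y => G.dist w y = d)
        = N.filter (fun y => G.dist w y = d) := by
      ext y
      simp only [Finset.mem_filter, hp1]
      constructor
      · rintro ⟨⟨a1, _⟩, a3⟩; exact ⟨a1, a3⟩
      · rintro ⟨a1, a3⟩; exact ⟨⟨a1, by omega⟩, a3⟩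
    have ht3 : (N.filter (fun y => ¬ p1 y)).filter (fun y => ¬ G.dist w y = d)
        = N.filter (fun y => G.dist w y = d + 1) := by
      ext y
      simp only [Finset.mem_filter, hp1]
      constructor
      · rintro ⟨⟨a1, a2⟩, a3⟩
        have := hboundd y a1
        exact ⟨a1, by omega⟩
      · rintro ⟨a1, a2⟩
        exact ⟨⟨a1, by omega⟩, by omega⟩
    have e1 : ∑ y ∈ N.filter p1, g (G.dist w y) = ((N.filter p1).card : ℝ) * g (d-1) := by
      have hcg : ∀ y ∈ N.filter p1, g (G.dist w y) = g (d - 1) := by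
        intro y hy
        have h2 := (Finset.mem_filter.mp hy).2
        simp only [hp1] at h2
        have : G.dist w y = d - 1 := by omega
        rw [this]
      rw [Finset.sum_congr rfl hcg, Finset.sum_const, nsmul_eq_mul]
    have e2 : ∑ y ∈ N.filter (fun y => G.dist w y = d), g (G.dist w y)
        = ((N.filter (fun y => G.dist w y = d)).card : ℝ) * g d := by
      have hcg : ∀ y ∈ N.filter (fun y => G.dist w y = d), g (G.dist w y) = g d := by
        intro y hy
        rw [(Finset.mem_filter.mp hy).2]
      rw [Finset.sum_congr rfl hcg, Finset.sum_const, nsmul_eq_mul]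
    have e3 : ∑ y ∈ N.filter (fun y => G.dist w y = d + 1), g (G.dist w y)
        = ((N.filter (fun y => G.dist w y = d + 1)).card : ℝ) * g (d+1) := by
      have hcg : ∀ y ∈ N.filter (fun y => G.dist w y = d + 1), g (G.dist w y) = g (d+1) := by
        intro y hy
        rw [(Finset.mem_filter.mp hy).2]
      rw [Finset.sum_congr rfl hcg, Finset.sum_const, nsmul_eq_mul]
    have hsplitsum : ∑ y ∈ N, g (G.dist w y)
        = ((N.filter p1).card : ℝ) * g (d-1)
          + ((N.filter (fun y => G.dist w y = d)).card : ℝ) * g d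
          + ((N.filter (fun y => G.dist w y = d + 1)).card : ℝ) * g (d+1) := by
      rw [← Finset.sum_filter_add_sum_filter_not N p1]
      rw [← Finset.sum_filter_add_sum_filter_not (N.filter (fun y => ¬ p1 y))
        (fun y => G.dist w y = d)]
      rw [ht2, ht3, e1, e2, e3]
      ring
    have hdeg : (G.degree x : ℝ) = ((N.filter p1).card : ℝ)
        + ((N.filter (fun y => G.dist w y = d)).card : ℝ)
        + ((N.filter (fun y => G.dist w y = d + 1)).card : ℝ) := by
      have hcard : N.card = (N.filter p1).card + ((N.filter (fun y => ¬ p1 y))).card :=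
        (Finset.card_filter_add_card_filter_not p1).symm
      have hcard2 : (N.filter (fun y => ¬ p1 y)).card
          = (N.filter (fun y => G.dist w y = d)).card
            + (N.filter (fun y => G.dist w y = d + 1)).card := by
        rw [← ht2, ← ht3]
        exact (Finset.card_filter_add_card_filter_not _).symm
      rw [← SimpleGraph.card_neighborFinset_eq_degree, ← hN, hcard, hcard2]
      push_cast
      ring
    rw [hsplitsum, hdeg]
    rcases Nat.eq_zero_or_pos d with rfl | hdpos
    · -- d = 0, so x = w
      obtain rfl : w = x := hG.dist_eq_zero_iff.mp hd
      have ht1e : N.filter p1 = ∅ :=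
        Finset.filter_false_of_mem (fun y _ => by simp [hp1])
      have ht3c : (N.filter (fun y => G.dist w y = 0 + 1)).card = b 0 := by
        have h := hb 0 hDpos w w SimpleGraph.dist_self
        rw [natCard_setOf_aux] at h
        rw [← h]
        congr 1
        ext y
        simp only [Finset.mem_filter, hN, SimpleGraph.mem_neighborFinset, Finset.mem_univ,
          true_and]
        try tauto
      rw [ht1e, ht3c, if_pos rfl]
      simp only [Finset.card_empty, Nat.cast_zero]
      linear_combination idA
    · -- d ≥ 1
      have hxw : ¬ x = w := by
        intro hxx
        rw [hxx, SimpleGraph.dist_self] at hd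
        omega
      rw [if_neg hxw]
      have ht1c : (N.filter p1).card = c d := by
        have h := hc d hdpos hdD x w (by rw [SimpleGraph.dist_comm]; exact hd)
        rw [natCard_setOf_aux] at h
        rw [← h]
        congr 1
        ext y
        simp only [Finset.mem_filter, hN, SimpleGraph.mem_neighborFinset, Finset.mem_univ,
          true_and, hp1]
        constructor
        · rintro ⟨a1, a2⟩; exact ⟨a1, by omega⟩
        · rintro ⟨a1, a2⟩; exact ⟨a1, by omega⟩
      rcases Nat.lt_or_ge d D with hdlt | hdge
      · have ht3c : (N.filter (fun y => G.dist w y = d + 1)).card = b d := by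
          have h := hb d hdlt x w (by rw [SimpleGraph.dist_comm]; exact hd)
          rw [natCard_setOf_aux] at h
          rw [← h]
          congr 1
          ext y
          simp only [Finset.mem_filter, hN, SimpleGraph.mem_neighborFinset, Finset.mem_univ,
            true_and]
          try tauto
        rw [ht1c, ht3c]
        linear_combination idB d hdpos hdlt
      · obtain rfl : D = d := le_antisymm hdge hdD
        have ht3e : N.filter (fun y => G.dist w y = D + 1) = ∅ :=
          Finset.filter_false_of_mem (fun y _ => by have := hD₁ w y; omega)
        rw [ht1c, ht3e]
        simp only [Finset.card_empty, Nat.cast_zero]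
        linear_combination idC hdpos
  -- final assembly
  intro u v
  set φ : V → ℝ := fun y => g (G.dist u y) - g (G.dist v y) with hφdef
  have hφ : (G.lapMatrix ℝ).mulVec φ = Pi.single u 1 - Pi.single v 1 := by
    funext x
    have hsubfun : φ = (fun y => g (G.dist u y)) - (fun y => g (G.dist v y)) := rfl
    rw [hsubfun, mulVec_sub]
    simp only [Pi.sub_apply]
    rw [key u x, key v x]
    simp only [Pi.single_apply]
    ring
  have main := effRes_eq_aux (G.lapMatrix ℝ) Lplus (G.isSymm_lapMatrix ℝ) hMP.1 u v φ hφ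
  show (Pi.single u 1 - Pi.single v 1) ⬝ᵥ Lplus.mulVec (Pi.single u 1 - Pi.single v 1)
    = r (G.dist u v)
  rw [main, hφdef]
  simp only [SimpleGraph.dist_self, hg, hr0]
  rw [show G.dist v u = G.dist u v from SimpleGraph.dist_comm]
  ring
end

section
/- In a distance-regular graph G, the effective resistance between two vertices depends only on their shortest path distance: if dis_G(u,v) = dis_G(w,x), then dis^R_G(u,v) = dis^R_G(w,x). Moreover, the map d ↦ r_d assigning to each distance value the corresponding effective resistance is strictly increasing. -/
open Matrix

open Finset Polynomial

set_option linter.unusedSectionVars false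

section Aux

variable {V : Type} [Fintype V] [DecidableEq V]

/-- Uniqueness of the Moore–Penrose pseudoinverse. -/
lemma isMPInv_unique {A B C : Matrix V V ℝ} (hB : IsMPInv A B) (hC : IsMPInv A C) : B = C := by
  obtain ⟨hB1, hB2, hB3, hB4⟩ := hB
  obtain ⟨hC1, hC2, hC3, hC4⟩ := hC
  have hAB : A * B = A * C := by
    calc A * B = (A * B)ᵀ := hB3.symm
    _ = Bᵀ * Aᵀ := transpose_mul _ _
    _ = Bᵀ * (A * C * A)ᵀ := by rw [hC1]
    _ = Bᵀ * (Aᵀ * (A * C)ᵀ) := by rw [transpose_mul]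
    _ = (Bᵀ * Aᵀ) * (A * C)ᵀ := by rw [mul_assoc]
    _ = (A * B)ᵀ * (A * C) := by rw [← transpose_mul, hC3]
    _ = (A * B) * (A * C) := by rw [hB3]
    _ = (A * B * A) * C := by noncomm_ring
    _ = A * C := by rw [hB1]
  have hBA : B * A = C * A := by
    calc B * A = (B * A)ᵀ := hB4.symm
    _ = Aᵀ * Bᵀ := transpose_mul _ _
    _ = (A * (C * A))ᵀ * Bᵀ := by rw [← mul_assoc, hC1]
    _ = ((C * A)ᵀ * Aᵀ) * Bᵀ := by rw [transpose_mul]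
    _ = (C * A) * (Aᵀ * Bᵀ) := by rw [hC4, mul_assoc]
    _ = (C * A) * (B * A)ᵀ := by rw [← transpose_mul]
    _ = (C * A) * (B * A) := by rw [hB4]
    _ = C * (A * B * A) := by noncomm_ring
    _ = C * A := by rw [hB1]
  calc B = B * A * B := hB2.symm
  _ = (C * A) * B := by rw [hBA]
  _ = C * (A * B) := by rw [mul_assoc]
  _ = C * (A * C) := by rw [hAB]
  _ = C * A * C := by rw [mul_assoc]
  _ = C := hC2

/-- Entries depend only on distance. -/
def DC (G : SimpleGraph V) (B : Matrix V V ℝ) : Prop :=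
  ∀ u v w x : V, G.dist u v = G.dist w x → B u v = B w x

variable {G : SimpleGraph V} [DecidableRel G.Adj]

lemma dc_add {B C} (hB : DC G B) (hC : DC G C) : DC G (B + C) := by
  intro u v w x h; simp [Matrix.add_apply, hB u v w x h, hC u v w x h]

lemma dc_sub {B C} (hB : DC G B) (hC : DC G C) : DC G (B - C) := by
  intro u v w x h; simp [Matrix.sub_apply, hB u v w x h, hC u v w x h]

lemma dc_smul {B} (r : ℝ) (hB : DC G B) : DC G (r • B) := by
  intro u v w x h; simp [Matrix.smul_apply, hB u v w x h]

lemma dc_one (hG : G.Connected) : DC G (1 : Matrix V V ℝ) := by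
  intro u v w x h
  by_cases huv : u = v
  · subst huv
    have : w = x := hG.dist_eq_zero_iff.mp (by rw [← h, SimpleGraph.dist_self])
    subst this; simp
  · have hwx : ¬ w = x := by
      intro hwx; subst hwx
      exact huv (hG.dist_eq_zero_iff.mp (by rw [h, SimpleGraph.dist_self]))
    simp [Matrix.one_apply, huv, hwx]

lemma dc_const (c : ℝ) : DC G (Matrix.of fun _ _ => c) := by intro u v w x h; rfl

lemma sum_eq_of_card_eq {s t : Finset V} (h : s.card = t.card) {f g : V → ℝ}
    (hfg : ∀ y ∈ s, ∀ z ∈ t, f y = g z) : ∑ y ∈ s, f y = ∑ z ∈ t, g z := by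
  rcases s.eq_empty_or_nonempty with rfl | ⟨y₀, hy₀⟩
  · have ht : t = ∅ := card_eq_zero.mp (by simp [← h])
    simp [ht]
  · obtain ⟨z₀, hz₀⟩ : t.Nonempty := card_pos.mp (h ▸ card_pos.mpr ⟨y₀, hy₀⟩)
    calc ∑ y ∈ s, f y = ∑ y ∈ s, g z₀ := sum_congr rfl fun y hy => hfg y hy z₀ hz₀
    _ = s.card • g z₀ := by rw [sum_const]
    _ = t.card • g z₀ := by rw [h]
    _ = ∑ z ∈ t, g z₀ := by rw [sum_const]
    _ = ∑ z ∈ t, g z := sum_congr rfl fun z hz =>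
        ((hfg y₀ hy₀ z₀ hz₀).symm.trans (hfg y₀ hy₀ z hz))

lemma natCard_filter (P : V → Prop) [DecidablePred P] :
    Nat.card {y : V | P y} = (univ.filter P).card := by
  simp [Nat.card_eq_fintype_card, Fintype.card_subtype]

lemma dc_mul (hDR : IsDistanceRegular G) {B C} (hB : DC G B) (hC : DC G C) :
    DC G (B * C) := by
  intro u v w x h
  rw [Matrix.mul_apply, Matrix.mul_apply]
  set T : Finset (ℕ × ℕ) :=
    (univ.image fun y => (G.dist u y, G.dist v y)) ∪
      (univ.image fun y => (G.dist w y, G.dist x y)) with hT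
  have h1 : ∑ y : V, B u y * C y v
      = ∑ p ∈ T, ∑ y ∈ univ.filter (fun y => (G.dist u y, G.dist v y) = p), B u y * C y v :=
    (Finset.sum_fiberwise_of_maps_to (fun y _ => Finset.mem_union_left _
      (Finset.mem_image_of_mem _ (mem_univ y))) _).symm
  have h2 : ∑ y : V, B w y * C y x
      = ∑ p ∈ T, ∑ y ∈ univ.filter (fun y => (G.dist w y, G.dist x y) = p), B w y * C y x :=
    (Finset.sum_fiberwise_of_maps_to (fun y _ => Finset.mem_union_right _
      (Finset.mem_image_of_mem _ (mem_univ y))) _).symm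
  rw [h1, h2]
  refine Finset.sum_congr rfl fun p _ => ?_
  obtain ⟨i, j⟩ := p
  have hfil1 : univ.filter (fun y => (G.dist u y, G.dist v y) = (i, j))
      = univ.filter (fun y => G.dist u y = i ∧ G.dist v y = j) := by
    apply filter_congr; intro y _; simp [Prod.ext_iff]
  have hfil2 : univ.filter (fun y => (G.dist w y, G.dist x y) = (i, j))
      = univ.filter (fun y => G.dist w y = i ∧ G.dist x y = j) := by
    apply filter_congr; intro y _; simp [Prod.ext_iff]
  rw [hfil1, hfil2]
  have hcard := hDR i j u v w x h
  rw [natCard_filter, natCard_filter] at hcard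
  refine sum_eq_of_card_eq hcard fun y hy z hz => ?_
  simp only [mem_filter, mem_univ, true_and] at hy hz
  have e1 : B u y = B w z := hB u y w z (by rw [hy.1, hz.1])
  have e2 : C y v = C z x := hC y v z x (by
    rw [SimpleGraph.dist_comm (u := y), hy.2, SimpleGraph.dist_comm (u := z), hz.2])
  rw [e1, e2]

lemma dc_pow (hDR : IsDistanceRegular G) (hG : G.Connected) {M} (hM : DC G M) (n : ℕ) :
    DC G (M ^ n) := by
  induction n with
  | zero => simpa using dc_one hG
  | succ k ih => rw [pow_succ]; exact dc_mul hDR ih hM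

lemma dc_aeval (hDR : IsDistanceRegular G) (hG : G.Connected) {M} (hM : DC G M)
    (q : Polynomial ℝ) : DC G (aeval M q) := by
  induction q using Polynomial.induction_on' with
  | add p q hp hq => rw [map_add]; exact dc_add hp hq
  | monomial n a =>
      rw [aeval_monomial, Algebra.algebraMap_eq_smul_one, smul_mul_assoc, one_mul]
      exact dc_smul a (dc_pow hDR hG hM n)

lemma dc_inv (hDR : IsDistanceRegular G) (hG : G.Connected) {M : Matrix V V ℝ}
    (hM : DC G M) (hU : IsUnit M) : DC G M⁻¹ := by
  have hdet : IsUnit M.det := (Matrix.isUnit_iff_isUnit_det M).mp hU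
  have hc0 : M.charpoly.coeff 0 ≠ 0 := by
    intro h0
    have := Matrix.det_eq_sign_charpoly_coeff M
    rw [h0, mul_zero] at this
    exact hdet.ne_zero this
  have hCH := Matrix.aeval_self_charpoly M
  have hsplit : X * M.charpoly.divX + C (M.charpoly.coeff 0) = M.charpoly :=
    X_mul_divX_add M.charpoly
  have h2 : M * aeval M M.charpoly.divX + (M.charpoly.coeff 0) • 1 = 0 := by
    have := congrArg (aeval M) hsplit
    rw [map_add, _root_.map_mul, aeval_X, aeval_C, hCH, Algebra.algebraMap_eq_smul_one] at this
    exact this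
  set N := aeval M M.charpoly.divX with hN
  have hMN : M * ((-(M.charpoly.coeff 0))⁻¹ • N) = 1 := by
    have hMN0 : M * N = (-(M.charpoly.coeff 0)) • 1 := by
      have h3 := h2
      rw [add_eq_zero_iff_eq_neg] at h3
      rw [h3, neg_smul]
    rw [mul_smul_comm, hMN0, smul_smul, inv_mul_cancel₀ (by simpa using hc0), one_smul]
  have hinv : M⁻¹ = (-(M.charpoly.coeff 0))⁻¹ • N := Matrix.inv_eq_right_inv hMN
  rw [hinv]
  exact dc_smul _ (dc_aeval hDR hG hM _)

lemma deg_const (hDR : IsDistanceRegular G) (u w : V) : G.degree u = G.degree w := by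
  have h := hDR 1 1 u u w w (by rw [SimpleGraph.dist_self, SimpleGraph.dist_self])
  rw [natCard_filter, natCard_filter] at h
  have e : ∀ z : V, (univ.filter fun y => G.dist z y = 1 ∧ G.dist z y = 1).card
      = G.degree z := by
    intro z
    rw [← SimpleGraph.card_neighborFinset_eq_degree]
    congr 1
    ext y
    simp [SimpleGraph.dist_eq_one_iff_adj]
  rw [e, e] at h
  exact h

lemma lap_apply (a b : V) :
    G.lapMatrix ℝ a b
      = (if a = b then (G.degree a : ℝ) else 0) - (if G.Adj a b then 1 else 0) := by
  simp [SimpleGraph.lapMatrix, SimpleGraph.degMatrix, Matrix.sub_apply, Matrix.diagonal_apply]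

lemma dc_lap (hG : G.Connected) (hDR : IsDistanceRegular G) : DC G (G.lapMatrix ℝ) := by
  intro u v w x h
  rw [lap_apply, lap_apply]
  by_cases hd0 : G.dist u v = 0
  · have huv : u = v := hG.dist_eq_zero_iff.mp hd0
    have hwx : w = x := hG.dist_eq_zero_iff.mp (h ▸ hd0)
    subst huv; subst hwx
    simp [SimpleGraph.irrefl, deg_const hDR u w]
  by_cases hd1 : G.dist u v = 1
  · have huv : G.Adj u v := SimpleGraph.dist_eq_one_iff_adj.mp hd1
    have hwx : G.Adj w x := SimpleGraph.dist_eq_one_iff_adj.mp (h ▸ hd1)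
    simp [huv, hwx, huv.ne, hwx.ne]
  · have h2 : 2 ≤ G.dist u v := by omega
    have huv : u ≠ v := by
      intro e; subst e; rw [SimpleGraph.dist_self] at h2; omega
    have hwx : w ≠ x := by
      intro e; subst e; rw [SimpleGraph.dist_self] at h; omega
    have hnuv : ¬ G.Adj u v := fun ha => by
      rw [← SimpleGraph.dist_eq_one_iff_adj (G := G)] at ha; omega
    have hnwx : ¬ G.Adj w x := fun ha => by
      rw [← SimpleGraph.dist_eq_one_iff_adj (G := G)] at ha
      rw [← h] at ha; omega
    simp [huv, hwx, hnuv, hnwx]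

/-- The main structural fact: `Lplus` is distance-constant and `L * Lplus = 1 - J/n`. -/
lemma lplus_props (hG : G.Connected) (hDR : IsDistanceRegular G)
    (Lplus : Matrix V V ℝ) (hMP : IsMPInv (G.lapMatrix ℝ) Lplus) :
    DC G Lplus ∧
      G.lapMatrix ℝ * Lplus
        = 1 - Matrix.of (fun _ _ : V => ((Fintype.card V : ℝ))⁻¹) := by
  haveI : Nonempty V := hG.nonempty
  have hn : (0:ℝ) < (Fintype.card V : ℝ) := by
    exact_mod_cast Fintype.card_pos
  set L := G.lapMatrix ℝ with hLdef
  set P : Matrix V V ℝ := Matrix.of (fun _ _ => ((Fintype.card V : ℝ))⁻¹) with hPdef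
  have hrow : ∀ a : V, ∑ b, L a b = 0 := by
    intro a
    have := congrFun (G.lapMatrix_mulVec_const_eq_zero (R := ℝ)) a
    simpa [Matrix.mulVec, dotProduct] using this
  have hLt : Lᵀ = L := G.isSymm_lapMatrix (R := ℝ)
  have hsymL : ∀ a b, L a b = L b a := by
    intro a b
    have h := congrFun (congrFun hLt b) a
    simpa [Matrix.transpose_apply] using h
  have hLP : L * P = 0 := by
    ext a b
    rw [Matrix.mul_apply]
    simp only [hPdef, Matrix.of_apply, Matrix.zero_apply]
    rw [← Finset.sum_mul, hrow, zero_mul]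
  have hPL : P * L = 0 := by
    ext a b
    rw [Matrix.mul_apply]
    simp only [hPdef, Matrix.of_apply, Matrix.zero_apply]
    rw [← Finset.mul_sum]
    have : ∑ y, L y b = 0 := by
      rw [Finset.sum_congr rfl fun y _ => hsymL y b]
      exact hrow b
    rw [this, mul_zero]
  have hPP : P * P = P := by
    ext a b
    rw [Matrix.mul_apply]
    simp only [hPdef, Matrix.of_apply]
    rw [Finset.sum_const, card_univ, nsmul_eq_mul]
    field_simp
  have hPt : Pᵀ = P := by ext a b; rfl
  set MM := L + P with hMMdef
  have hMU : IsUnit MM := by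
    rw [← Matrix.mulVec_injective_iff_isUnit]
    have hker : ∀ z, MM *ᵥ z = 0 → z = 0 := by
      intro z hz
      have hq : z ⬝ᵥ (MM *ᵥ z) = 0 := by rw [hz, dotProduct_zero]
      have hPz : z ⬝ᵥ (P *ᵥ z) = ((Fintype.card V : ℝ))⁻¹ * (∑ y, z y)^2 := by
        simp only [Matrix.mulVec, dotProduct, hPdef, Matrix.of_apply]
        rw [Finset.sum_congr rfl fun a _ => by rw [← Finset.mul_sum]]
        rw [← Finset.sum_mul]
        ring
      have hsplit : z ⬝ᵥ (MM *ᵥ z) = z ⬝ᵥ (L *ᵥ z) + z ⬝ᵥ (P *ᵥ z) := by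
        rw [hMMdef, Matrix.add_mulVec, dotProduct_add]
      have hL0 : 0 ≤ z ⬝ᵥ (L *ᵥ z) := by
        simpa using (SimpleGraph.posSemidef_lapMatrix ℝ G).dotProduct_mulVec_nonneg z
      have hP0 : 0 ≤ ((Fintype.card V : ℝ))⁻¹ * (∑ y, z y)^2 := by positivity
      have hL00 : z ⬝ᵥ (L *ᵥ z) = 0 := by
        rw [hsplit, hPz] at hq; linarith
      have hsum0 : ∑ y, z y = 0 := by
        have : ((Fintype.card V : ℝ))⁻¹ * (∑ y, z y)^2 = 0 := by
          rw [hsplit, hPz] at hq; linarith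
        have h2 : (∑ y, z y)^2 = 0 := by
          rcases mul_eq_zero.mp this with h | h
          · exact absurd h (by positivity)
          · exact h
        exact pow_eq_zero_iff (by norm_num) |>.mp h2
      have hcon := (G.lapMatrix_toLinearMap₂'_apply'_eq_zero_iff_forall_reachable z).mp
        (by rw [Matrix.toLinearMap₂'_apply']; exact hL00)
      obtain ⟨v₀⟩ := ‹Nonempty V›
      have hzc : ∀ a, z a = z v₀ := fun a => hcon a v₀ (hG.preconnected a v₀)
      have : (Fintype.card V : ℝ) * z v₀ = 0 := by
        rw [← hsum0, Finset.sum_congr rfl fun a _ => hzc a, Finset.sum_const, card_univ,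
          nsmul_eq_mul]
      have hz0 : z v₀ = 0 := by
        rcases mul_eq_zero.mp this with h | h
        · exact absurd h hn.ne'
        · exact h
      funext a
      rw [hzc a, hz0]; rfl
    intro a b hab
    have h0 : MM *ᵥ (a - b) = 0 := by rw [Matrix.mulVec_sub, hab, sub_self]
    exact sub_eq_zero.mp (hker _ h0)
  have hdet : IsUnit MM.det := (Matrix.isUnit_iff_isUnit_det MM).mp hMU
  have hMMinv : MM * MM⁻¹ = 1 := Matrix.mul_nonsing_inv _ hdet
  have hMMinv' : MM⁻¹ * MM = 1 := Matrix.nonsing_inv_mul _ hdet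
  have hPM : P * MM = P := by rw [hMMdef, mul_add, hPL, hPP, zero_add]
  have hMPm : MM * P = P := by rw [hMMdef, add_mul, hLP, hPP, zero_add]
  have hPMinv : P * MM⁻¹ = P := by
    calc P * MM⁻¹ = (P * MM) * MM⁻¹ := by rw [hPM]
    _ = P * (MM * MM⁻¹) := by rw [mul_assoc]
    _ = P := by rw [hMMinv, mul_one]
  have hMinvP : MM⁻¹ * P = P := by
    calc MM⁻¹ * P = MM⁻¹ * (MM * P) := by rw [hMPm]
    _ = (MM⁻¹ * MM) * P := by rw [mul_assoc]
    _ = P := by rw [hMMinv', one_mul]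
  set B₀ := MM⁻¹ - P with hB₀def
  have hLeq : L = MM - P := by rw [hMMdef, add_sub_cancel_right]
  have hLMinv : L * MM⁻¹ = 1 - P := by rw [hLeq, sub_mul, hMMinv, hPMinv]
  have hMinvL : MM⁻¹ * L = 1 - P := by rw [hLeq, mul_sub, hMMinv', hMinvP]
  have hLB : L * B₀ = 1 - P := by rw [hB₀def, mul_sub, hLMinv, hLP, sub_zero]
  have hBL : B₀ * L = 1 - P := by rw [hB₀def, sub_mul, hMinvL, hPL, sub_zero]
  have hMPB : IsMPInv L B₀ := by
    refine ⟨?_, ?_, ?_, ?_⟩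
    · rw [hLB, sub_mul, one_mul, hPL, sub_zero]
    · rw [mul_assoc, hLB, mul_sub, mul_one, hB₀def, sub_mul, hMinvP, hPP,
        sub_self, sub_zero]
    · rw [hLB, transpose_sub, transpose_one, hPt]
    · rw [hBL, transpose_sub, transpose_one, hPt]
  have heq : Lplus = B₀ := isMPInv_unique hMP hMPB
  constructor
  · rw [heq, hB₀def]
    exact dc_sub (dc_inv hDR hG (dc_add (dc_lap hG hDR) (dc_const _)) hMU) (dc_const _)
  · rw [heq]
    exact hLB

lemma effRes_eq (B : Matrix V V ℝ) (u v : V) :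
    effRes B u v = B u u - B u v - B v u + B v v := by
  simp [effRes, Matrix.mulVec_sub, Matrix.mulVec_single, sub_dotProduct, dotProduct_sub,
    single_dotProduct]
  ring

lemma exists_next (hG : G.Connected) {y x : V} (h : G.dist y x ≠ 0) :
    ∃ z, G.Adj y z ∧ G.dist z x = G.dist y x - 1 := by
  obtain ⟨p, hp⟩ := hG.exists_walk_length_eq_dist y x
  cases p with
  | nil => rw [← hp] at h; simp at h
  | @cons _ z _ ha q =>
      refine ⟨z, ha, ?_⟩
      have h1 : G.dist z x ≤ q.length := SimpleGraph.dist_le q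
      have h2 : G.dist y x ≤ G.dist y z + G.dist z x := hG.dist_triangle
      have h3 : G.dist y z = 1 := SimpleGraph.dist_eq_one_iff_adj.mpr ha
      rw [SimpleGraph.Walk.length_cons] at hp
      omega

lemma exists_at_dist (hG : G.Connected) (w x : V) :
    ∀ i, i ≤ G.dist w x → ∃ y, G.dist w y = i ∧ G.dist y x = G.dist w x - i := by
  intro i
  induction i with
  | zero => intro _; exact ⟨w, by simp, by simp⟩
  | succ k ih =>
      intro hk
      obtain ⟨y, hy1, hy2⟩ := ih (by omega)
      have hne : G.dist y x ≠ 0 := by omega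
      obtain ⟨z, hadj, hz⟩ := exists_next hG hne
      have h3 : G.dist y z = 1 := SimpleGraph.dist_eq_one_iff_adj.mpr hadj
      have hup : G.dist w z ≤ G.dist w y + G.dist y z := hG.dist_triangle
      have hlow : G.dist w x ≤ G.dist w z + G.dist z x := hG.dist_triangle
      exact ⟨z, by omega, by omega⟩

/-- Strict step: the common value of `Lplus w ·` strictly decreases from distance `i`
to distance `i+1`, as long as some vertex is farther than `i` from `w`. -/
lemma step_lemma (hG : G.Connected) {Lplus : Matrix V V ℝ} (hDC : DC G Lplus)
    (hLB : G.lapMatrix ℝ * Lplus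
      = 1 - Matrix.of (fun _ _ : V => ((Fintype.card V : ℝ))⁻¹))
    (w x y z : V) (i : ℕ) (hix : i < G.dist w x)
    (hy : G.dist w y = i) (hz : G.dist w z = i + 1) : Lplus w z < Lplus w y := by
  classical
  have hn : (0:ℝ) < (Fintype.card V : ℝ) := by
    haveI : Nonempty V := hG.nonempty
    exact_mod_cast Fintype.card_pos
  set f : V → ℝ := fun a => Lplus w a with hf
  set B : Finset V := univ.filter (fun a => G.dist w a ≤ i) with hBdef
  have hwB : w ∈ B := by simp [hBdef, SimpleGraph.dist_self]
  have hxB : x ∉ B := by simp [hBdef]; omega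
  have hrowid : ∀ a : V, (∑ b, (if G.Adj a b then f a - f b else 0))
      = (if a = w then (1:ℝ) else 0) - ((Fintype.card V : ℝ))⁻¹ := by
    intro a
    have h1 : (G.lapMatrix ℝ * Lplus) a w
        = (if a = w then (1:ℝ) else 0) - ((Fintype.card V : ℝ))⁻¹ := by
      rw [hLB]; simp [Matrix.sub_apply, Matrix.one_apply]
    rw [Matrix.mul_apply] at h1
    have h2 : ∀ b, Lplus b w = f b := fun b =>
      hDC b w w b (SimpleGraph.dist_comm)
    have h3 : ∑ b, G.lapMatrix ℝ a b * Lplus b w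
        = (G.degree a : ℝ) * f a - ∑ b ∈ G.neighborFinset a, f b := by
      have h4 := G.lapMatrix_mulVec_apply a f
      rw [← h4]
      simp only [Matrix.mulVec, dotProduct]
      exact Finset.sum_congr rfl fun b _ => by rw [h2 b]
    have hNfil : G.neighborFinset a = univ.filter (G.Adj a) := by ext; simp
    have h5 : (∑ b, (if G.Adj a b then f a - f b else 0))
        = (G.degree a : ℝ) * f a - ∑ b ∈ G.neighborFinset a, f b := by
      rw [← Finset.sum_filter, ← hNfil, Finset.sum_sub_distrib, Finset.sum_const,
        SimpleGraph.card_neighborFinset_eq_degree, nsmul_eq_mul]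
    rw [h5, ← h3, h1]
  -- total flow out of the ball
  have hT : ∑ a ∈ B, ∑ b, (if G.Adj a b then f a - f b else 0)
      = 1 - B.card * ((Fintype.card V : ℝ))⁻¹ := by
    rw [Finset.sum_congr rfl fun a _ => hrowid a, Finset.sum_sub_distrib,
      Finset.sum_ite_eq' B w (fun _ => (1:ℝ)), if_pos hwB, Finset.sum_const, nsmul_eq_mul]
  have hcard : B.card < Fintype.card V := by
    rw [← Finset.card_univ]
    exact Finset.card_lt_card (Finset.ssubset_univ_iff.mpr
      (fun he => hxB (he ▸ Finset.mem_univ x)))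
  have hTpos : (0:ℝ) < 1 - B.card * ((Fintype.card V : ℝ))⁻¹ := by
    have hc : (B.card : ℝ) < (Fintype.card V : ℝ) := by exact_mod_cast hcard
    have : (B.card : ℝ) * ((Fintype.card V : ℝ))⁻¹
        < (Fintype.card V : ℝ) * ((Fintype.card V : ℝ))⁻¹ :=
      mul_lt_mul_of_pos_right hc (inv_pos.mpr hn)
    rw [mul_inv_cancel₀ hn.ne'] at this
    linarith
  -- split the inner sum
  have hfilB : univ.filter (fun b => b ∈ B) = B := by ext b; simp
  have hsplit : ∀ a : V, (∑ b, (if G.Adj a b then f a - f b else 0))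
      = (∑ b ∈ B, (if G.Adj a b then f a - f b else 0))
        + ∑ b ∈ univ.filter (fun b => b ∉ B), (if G.Adj a b then f a - f b else 0) := by
    intro a
    rw [← Finset.sum_filter_add_sum_filter_not univ (fun b => b ∈ B), hfilB]
  -- antisymmetric part vanishes
  have hanti : ∑ a ∈ B, ∑ b ∈ B, (if G.Adj a b then f a - f b else 0) = 0 := by
    have hneg : ∀ a b : V, (if G.Adj a b then f a - f b else 0)
        = -(if G.Adj b a then f b - f a else 0) := by
      intro a b
      by_cases hab : G.Adj a b
      · rw [if_pos hab, if_pos hab.symm]; ring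
      · rw [if_neg hab, if_neg (fun h => hab h.symm), neg_zero]
    have hSS : (∑ a ∈ B, ∑ b ∈ B, (if G.Adj a b then f a - f b else 0))
        = - ∑ a ∈ B, ∑ b ∈ B, (if G.Adj a b then f a - f b else 0) := by
      calc (∑ a ∈ B, ∑ b ∈ B, (if G.Adj a b then f a - f b else 0))
          = ∑ a ∈ B, ∑ b ∈ B, -(if G.Adj b a then f b - f a else 0) :=
            Finset.sum_congr rfl fun a _ => Finset.sum_congr rfl fun b _ => hneg a b
      _ = - ∑ a ∈ B, ∑ b ∈ B, (if G.Adj b a then f b - f a else 0) := by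
            rw [← Finset.sum_neg_distrib]
            exact Finset.sum_congr rfl fun a _ => Finset.sum_neg_distrib _
      _ = - ∑ b ∈ B, ∑ a ∈ B, (if G.Adj b a then f b - f a else 0) := by
            rw [Finset.sum_comm]
      _ = - ∑ a ∈ B, ∑ b ∈ B, (if G.Adj a b then f a - f b else 0) := rfl
    linarith
  have hbdry : ∑ a ∈ B, ∑ b ∈ univ.filter (fun b => b ∉ B),
      (if G.Adj a b then f a - f b else 0)
      = 1 - B.card * ((Fintype.card V : ℝ))⁻¹ := by
    have h6 := hT
    rw [Finset.sum_congr rfl fun a _ => hsplit a, Finset.sum_add_distrib, hanti,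
      zero_add] at h6
    exact h6
  -- each boundary term is (if adj then (f y - f z) else 0)
  have hterm : ∀ a ∈ B, ∀ b ∈ univ.filter (fun b => b ∉ B),
      (if G.Adj a b then f a - f b else 0) = (if G.Adj a b then f y - f z else 0) := by
    intro a ha b hb
    by_cases hab : G.Adj a b
    · rw [if_pos hab, if_pos hab]
      have haB : G.dist w a ≤ i := by
        simpa [hBdef] using ha
      have hbB : ¬ G.dist w b ≤ i := by
        simpa [hBdef] using hb
      have hd1 : G.dist a b = 1 := SimpleGraph.dist_eq_one_iff_adj.mpr hab
      have htri : G.dist w b ≤ G.dist w a + G.dist a b := hG.dist_triangle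
      have htri2 : G.dist w a ≤ G.dist w b + G.dist b a := hG.dist_triangle
      have hd1' : G.dist b a = 1 := by rw [SimpleGraph.dist_comm]; exact hd1
      have hda : G.dist w a = i := by omega
      have hdb : G.dist w b = i + 1 := by omega
      have e1 : f a = f y := hDC w a w y (by rw [hda, hy])
      have e2 : f b = f z := hDC w b w z (by rw [hdb, hz])
      rw [e1, e2]
    · rw [if_neg hab, if_neg hab]
  by_contra hcon
  push_neg at hcon
  have ht0 : f y - f z ≤ 0 := by
    simp only [hf] at hcon ⊢
    linarith
  have hle : ∑ a ∈ B, ∑ b ∈ univ.filter (fun b => b ∉ B),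
      (if G.Adj a b then f a - f b else 0) ≤ 0 := by
    refine Finset.sum_nonpos fun a ha => Finset.sum_nonpos fun b hb => ?_
    rw [hterm a ha b hb]
    by_cases hab : G.Adj a b
    · rw [if_pos hab]; exact ht0
    · rw [if_neg hab]
  rw [hbdry] at hle
  linarith

end Aux

/-- In a connected distance-regular graph, the effective resistance between two vertices
depends only on their shortest path distance, and the value assigned to each distance is
strictly increasing in the distance. -/
theorem stmt_16 {V : Type} [Fintype V] [DecidableEq V]
    (G : SimpleGraph V) [DecidableRel G.Adj] (hG : G.Connected)
    (hDR : IsDistanceRegular G)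
    (Lplus : Matrix V V ℝ) (hMP : IsMPInv (G.lapMatrix ℝ) Lplus) :
    (∀ u v w x : V, G.dist u v = G.dist w x →
      effRes Lplus u v = effRes Lplus w x) ∧
    (∀ u v w x : V, G.dist u v < G.dist w x →
      effRes Lplus u v < effRes Lplus w x) := by
  classical
  obtain ⟨hDC, hLB⟩ := lplus_props hG hDR Lplus hMP
  have part1 : ∀ u v w x : V, G.dist u v = G.dist w x →
      effRes Lplus u v = effRes Lplus w x := by
    intro u v w x h
    have e1 : Lplus u u = Lplus w w := hDC u u w w (by rw [SimpleGraph.dist_self,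
      SimpleGraph.dist_self])
    have e2 : Lplus v v = Lplus w w := hDC v v w w (by rw [SimpleGraph.dist_self,
      SimpleGraph.dist_self])
    have e3 : Lplus x x = Lplus w w := hDC x x w w (by rw [SimpleGraph.dist_self,
      SimpleGraph.dist_self])
    have e4 : Lplus u v = Lplus w x := hDC u v w x h
    have e5 : Lplus v u = Lplus x w := hDC v u x w (by
      rw [SimpleGraph.dist_comm, SimpleGraph.dist_comm (u := x)]; exact h)
    rw [effRes_eq, effRes_eq]
    linarith
  refine ⟨part1, ?_⟩
  intro u v w x hlt
  obtain ⟨y, hy, -⟩ := exists_at_dist hG w x (G.dist u v) (le_of_lt hlt)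
  have h1 : effRes Lplus u v = effRes Lplus w y := part1 u v w y (by rw [hy])
  rw [h1]
  have hformula : ∀ a : V, effRes Lplus w a = 2 * (Lplus w w - Lplus w a) := by
    intro a
    rw [effRes_eq]
    have e1 : Lplus a a = Lplus w w := hDC a a w w (by rw [SimpleGraph.dist_self,
      SimpleGraph.dist_self])
    have e2 : Lplus a w = Lplus w a := hDC a w w a SimpleGraph.dist_comm
    linarith
  rw [hformula, hformula]
  have hkey : Lplus w x < Lplus w y := by
    have hmono : ∀ j, G.dist u v < j → j ≤ G.dist w x → ∀ z, G.dist w z = j →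
        Lplus w z < Lplus w y := by
      intro j
      induction j with
      | zero => intro hdj; exact absurd hdj (Nat.not_lt_zero _)
      | succ k ih =>
          intro hdj hjD z hzj
          obtain ⟨yk, hyk, -⟩ := exists_at_dist hG w x k (by omega)
          have hstep : Lplus w z < Lplus w yk :=
            step_lemma hG hDC hLB w x yk z k (by omega) hyk hzj
          by_cases hcase : G.dist u v < k
          · exact lt_trans hstep (ih hcase (by omega) yk hyk)
          · have hkd : k = G.dist u v := by omega
            have heq : Lplus w yk = Lplus w y := hDC w yk w y (by rw [hyk, hy, hkd])
            linarith
    exact hmono (G.dist w x) hlt le_rfl x rfl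
  linarith
end
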